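/- arXiv:2605.14072 — 3 statements merged into one kernel-verified Lean document; each statement's English description precedes it below -/
import Mathlib

section
/- Let 𝓕, 𝓗 ∈ FHC and suppose that for every x ∈ c₀₀, ‖x‖_𝓕 = sup{ |Σ_n x(n)·y(n)| : y ∈ c₀₀, ‖y‖_𝓗 ≤ 1 } (i.e., the canonical basis of X_𝓕 is isometrically equivalent to the coordinate functionals of X_𝓗). Then 𝓗 = 𝓕^⊥ and, symmetrically, for every x ∈ c₀₀, ‖x‖_𝓗 = sup{ |Σ_n x(n)·y(n)| : y ∈ c₀₀, ‖y‖_𝓕 ≤ 1 }; in particular 𝓕 = 𝓗^⊥. -/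
open scoped ENNReal

/-- A family of finite subsets of ℕ which is hereditary and covers ℕ. -/
def FHC (F : Set (Finset ℕ)) : Prop :=
  (∀ ⦃E S : Finset ℕ⦄, E ⊆ S → S ∈ F → E ∈ F) ∧ (∀ n : ℕ, {n} ∈ F)

/-- The orthogonal family: finite sets meeting every member of `F` in at most one point. -/
def perp (F : Set (Finset ℕ)) : Set (Finset ℕ) :=
  {E | ∀ S ∈ F, (E ∩ S).card ≤ 1}

/-- The combinatorial extended norm generated by a family of finite sets. -/
noncomputable def combNorm (F : Set (Finset ℕ)) (x : ℕ → ℝ) : ℝ≥0∞ :=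
  ⨆ S ∈ F, ENNReal.ofReal (∑ i ∈ S, |x i|)

/-- `sup { |Σ x(n)·y(n)| : y ∈ c₀₀, ‖y‖_H ≤ 1 }`. -/
noncomputable def dualNorm (H : Set (Finset ℕ)) (x : ℕ → ℝ) : ℝ≥0∞ :=
  ⨆ y ∈ {y : ℕ → ℝ | (Function.support y).Finite ∧ combNorm H y ≤ 1},
    ENNReal.ofReal |∑ᶠ n, x n * y n|

/-! ### Auxiliary lemmas -/

lemma combNorm_le' {F : Set (Finset ℕ)} {x : ℕ → ℝ} {c : ℝ≥0∞}
    (h : ∀ S ∈ F, ENNReal.ofReal (∑ i ∈ S, |x i|) ≤ c) : combNorm F x ≤ c :=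
  iSup₂_le h

lemma le_combNorm' {F : Set (Finset ℕ)} {x : ℕ → ℝ} {S : Finset ℕ} (hS : S ∈ F) :
    ENNReal.ofReal (∑ i ∈ S, |x i|) ≤ combNorm F x :=
  le_iSup₂ (f := fun S (_ : S ∈ F) => ENNReal.ofReal (∑ i ∈ S, |x i|)) S hS

lemma dualNorm_le' {H : Set (Finset ℕ)} {x : ℕ → ℝ} {c : ℝ≥0∞}
    (h : ∀ y : ℕ → ℝ, (Function.support y).Finite → combNorm H y ≤ 1 →
      ENNReal.ofReal |∑ᶠ n, x n * y n| ≤ c) : dualNorm H x ≤ c :=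
  iSup₂_le fun y hy => h y hy.1 hy.2

lemma le_dualNorm' {H : Set (Finset ℕ)} {x y : ℕ → ℝ}
    (h1 : (Function.support y).Finite) (h2 : combNorm H y ≤ 1) :
    ENNReal.ofReal |∑ᶠ n, x n * y n| ≤ dualNorm H x :=
  le_iSup₂ (f := fun y (_ : y ∈ {y : ℕ → ℝ | (Function.support y).Finite ∧ combNorm H y ≤ 1})
    => ENNReal.ofReal |∑ᶠ n, x n * y n|) y ⟨h1, h2⟩

/-- the indicator of a finite set -/
noncomputable def chi (E : Finset ℕ) : ℕ → ℝ := fun n => if n ∈ E then 1 else 0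

lemma chi_support (E : Finset ℕ) : (Function.support (chi E)).Finite := by
  apply Set.Finite.subset E.finite_toSet
  intro n hn
  simp only [Function.mem_support, chi] at hn
  by_contra h
  rw [Finset.mem_coe] at h
  simp [h] at hn

lemma sum_abs_chi (E S : Finset ℕ) : ∑ i ∈ S, |chi E i| = ((S ∩ E).card : ℝ) := by
  classical
  have : ∀ i, |chi E i| = if i ∈ E then (1 : ℝ) else 0 := by
    intro i; unfold chi; split <;> simp
  simp only [this]
  rw [Finset.sum_boole, Finset.filter_mem_eq_inter]

lemma finsum_mul_eq_sum (x y : ℕ → ℝ) (S : Finset ℕ)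
    (h : ∀ n, n ∉ S → x n * y n = 0) :
    ∑ᶠ n, x n * y n = ∑ i ∈ S, x i * y i := by
  apply finsum_eq_sum_of_support_subset
  intro n hn
  simp only [Function.mem_support] at hn
  by_contra hns
  exact hn (h n hns)

lemma combNorm_finite {H : Set (Finset ℕ)} {x : ℕ → ℝ} (hx : (Function.support x).Finite) :
    combNorm H x ≤ ENNReal.ofReal (∑ i ∈ hx.toFinset, |x i|) := by
  apply combNorm_le'
  intro S _
  apply ENNReal.ofReal_le_ofReal
  calc ∑ i ∈ S, |x i| = ∑ i ∈ S ∩ hx.toFinset, |x i| := by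
        refine (Finset.sum_subset (Finset.inter_subset_left) ?_).symm
        intro i hiS hi
        simp only [Finset.mem_inter, hiS, true_and, Set.Finite.mem_toFinset,
          Function.mem_support, not_not] at hi
        simp [hi]
    _ ≤ ∑ i ∈ hx.toFinset, |x i| := by
        apply Finset.sum_le_sum_of_subset_of_nonneg Finset.inter_subset_right
        intros; positivity

/-- Main lemma: the duality hypothesis forces `H = perp F`. -/
lemma main_perp (F H : Set (Finset ℕ)) (hF : FHC F) (hH : FHC H)
    (hdual : ∀ x : ℕ → ℝ, (Function.support x).Finite → combNorm F x = dualNorm H x) :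
    H = perp F := by
  classical
  ext E
  constructor
  · -- H ⊆ perp F
    intro hE S hS
    by_contra hcard
    push_neg at hcard
    obtain ⟨a, ha, b, hb, hab⟩ := Finset.one_lt_card.mp hcard
    simp only [Finset.mem_inter] at ha hb
    set P : Finset ℕ := {a, b} with hP
    have hPS : P ⊆ S := by
      intro i hi
      rcases Finset.mem_insert.mp hi with h | h
      · exact h ▸ ha.2
      · exact (Finset.mem_singleton.mp h) ▸ hb.2
    have hPE : P ⊆ E := by
      intro i hi
      rcases Finset.mem_insert.mp hi with h | h
      · exact h ▸ ha.1
      · exact (Finset.mem_singleton.mp h) ▸ hb.1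
    have hPF : P ∈ F := hF.1 hPS hS
    have hPH : P ∈ H := hH.1 hPE hE
    have hPcard : (P.card : ℝ) = 2 := by
      rw [Finset.card_pair hab]; norm_num
    -- combNorm F (chi P) ≥ 2
    have h2 : (2 : ℝ≥0∞) ≤ combNorm F (chi P) := by
      have := le_combNorm' (x := chi P) hPF
      rwa [sum_abs_chi, Finset.inter_self, hPcard, ENNReal.ofReal_ofNat] at this
    -- dualNorm H (chi P) ≤ 1
    have h1 : dualNorm H (chi P) ≤ 1 := by
      apply dualNorm_le'
      intro y hy1 hy2
      have hsum : ∑ᶠ n, chi P n * y n = ∑ i ∈ P, chi P i * y i := by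
        apply finsum_mul_eq_sum
        intro n hn
        simp [chi, hn]
      have hval : ∑ i ∈ P, chi P i * y i = y a + y b := by
        rw [hP, Finset.sum_pair hab]
        simp [chi]
      have habs : |∑ᶠ n, chi P n * y n| ≤ ∑ i ∈ P, |y i| := by
        rw [hsum, hval, hP, Finset.sum_pair hab]
        exact abs_add_le _ _
      calc ENNReal.ofReal |∑ᶠ n, chi P n * y n| ≤ ENNReal.ofReal (∑ i ∈ P, |y i|) :=
            ENNReal.ofReal_le_ofReal habs
        _ ≤ combNorm H y := le_combNorm' hPH
        _ ≤ 1 := hy2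
    have := (hdual (chi P) (chi_support P)) ▸ h2
    have : (2 : ℝ≥0∞) ≤ 1 := this.trans h1
    norm_num at this
  · -- perp F ⊆ H
    intro hE
    by_contra hEH
    -- E is nonempty (∅ ∈ H by heredity)
    have hne : E.Nonempty := by
      rcases E.eq_empty_or_nonempty with h | h
      · exact absurd (h ▸ hH.1 (Finset.empty_subset {0}) (hH.2 0)) hEH
      · exact h
    -- E has at least 2 elements
    have hk2 : 2 ≤ E.card := by
      by_contra h
      push_neg at h
      interval_cases h' : E.card
      · exact absurd (Finset.card_eq_zero.mp h') hne.ne_empty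
      · obtain ⟨n, hn⟩ := Finset.card_eq_one.mp h'
        exact hEH (hn ▸ hH.2 n)
    set k : ℕ := E.card with hk
    have hmeet : ∀ S ∈ H, ((S ∩ E).card : ℝ) ≤ (k : ℝ) - 1 := by
      intro S hS
      have hlt : (S ∩ E).card < k := by
        have hle : (S ∩ E).card ≤ E.card := Finset.card_le_card Finset.inter_subset_right
        rcases lt_or_eq_of_le hle with h | h
        · exact h
        · exfalso
          have : S ∩ E = E := Finset.eq_of_subset_of_card_le Finset.inter_subset_right h.ge
          have hEsub : E ⊆ S := by
            intro i hi
            have : i ∈ S ∩ E := this.symm ▸ hi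
            exact (Finset.mem_inter.mp this).1
          exact hEH (hH.1 hEsub hS)
      have : (S ∩ E).card + 1 ≤ k := hlt
      have := Nat.cast_le (α := ℝ).mpr this
      push_cast at this
      linarith
    set r : ℝ := (k : ℝ) - 1 with hr
    have hrpos : 0 < r := by
      have : (2 : ℝ) ≤ (k : ℝ) := by exact_mod_cast hk2
      simp only [hr]; linarith
    set y : ℕ → ℝ := fun n => r⁻¹ * chi E n with hy
    have hysupp : (Function.support y).Finite := by
      apply Set.Finite.subset (chi_support E)
      intro n hn
      simp only [Function.mem_support, hy] at hn ⊢
      intro h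
      simp [h] at hn
    have hynorm : combNorm H y ≤ 1 := by
      apply combNorm_le'
      intro S hS
      rw [ENNReal.ofReal_le_one]
      have : ∑ i ∈ S, |y i| = r⁻¹ * ((S ∩ E).card : ℝ) := by
        simp only [hy, abs_mul, abs_inv, abs_of_pos hrpos, ← Finset.mul_sum, sum_abs_chi]
      rw [this, inv_mul_le_iff₀ hrpos, mul_one]
      exact hmeet S hS
    -- dualNorm H (chi E) ≥ k / r
    have hlow : ENNReal.ofReal ((k : ℝ) / r) ≤ dualNorm H (chi E) := by
      have hsum : ∑ᶠ n, chi E n * y n = (k : ℝ) / r := by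
        rw [finsum_mul_eq_sum _ _ E (by intro n hn; simp [chi, hn])]
        have : ∀ i ∈ E, chi E i * y i = r⁻¹ := by
          intro i hi; simp [chi, hi, hy]
        rw [Finset.sum_congr rfl this, Finset.sum_const, hk, nsmul_eq_mul]
        ring
      have := le_dualNorm' (x := chi E) hysupp hynorm
      rwa [hsum, abs_of_pos (by positivity)] at this
    -- combNorm F (chi E) ≤ 1
    have hup : combNorm F (chi E) ≤ 1 := by
      apply combNorm_le'
      intro S hS
      rw [sum_abs_chi, ENNReal.ofReal_le_one]
      have : (S ∩ E).card ≤ 1 := by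
        rw [Finset.inter_comm]; exact hE S hS
      exact_mod_cast this
    have hcontr : ENNReal.ofReal ((k : ℝ) / r) ≤ 1 :=
      hlow.trans ((hdual (chi E) (chi_support E)).symm.le.trans hup)
    rw [ENNReal.ofReal_le_one, div_le_one hrpos] at hcontr
    simp only [hr] at hcontr
    linarith

/-- Second lemma: the duality hypothesis gives the symmetric norm identity. -/
lemma main_dual (F H : Set (Finset ℕ)) (hF : FHC F) (hH : FHC H)
    (hdual : ∀ x : ℕ → ℝ, (Function.support x).Finite → combNorm F x = dualNorm H x) :
    ∀ x : ℕ → ℝ, (Function.support x).Finite → combNorm H x = dualNorm F x := by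
  classical
  have hHperp : H = perp F := main_perp F H hF hH hdual
  intro x hx
  apply le_antisymm
  · -- combNorm H x ≤ dualNorm F x
    apply combNorm_le'
    intro S hS
    set y : ℕ → ℝ := fun n => if n ∈ S then (if 0 ≤ x n then 1 else -1) else 0 with hy
    have hysupp : (Function.support y).Finite := by
      apply Set.Finite.subset S.finite_toSet
      intro n hn
      simp only [Function.mem_support, hy] at hn
      by_contra h
      rw [Finset.mem_coe] at h
      simp [h] at hn
    have hynorm : combNorm F y ≤ 1 := by
      apply combNorm_le'
      intro T hT
      rw [ENNReal.ofReal_le_one]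
      have habs : ∀ i, |y i| = if i ∈ S then (1 : ℝ) else 0 := by
        intro i
        simp only [hy]
        split
        · split <;> norm_num
        · simp
      calc ∑ i ∈ T, |y i| = ((T ∩ S).card : ℝ) := by
            simp only [habs]
            rw [Finset.sum_boole, Finset.filter_mem_eq_inter]
        _ ≤ 1 := by
            have : (S ∩ T).card ≤ 1 := (hHperp ▸ hS) T hT
            rw [Finset.inter_comm]
            exact_mod_cast this
    have hsum : ∑ᶠ n, x n * y n = ∑ i ∈ S, |x i| := by
      rw [finsum_mul_eq_sum _ _ S (by intro n hn; simp [hy, hn])]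
      apply Finset.sum_congr rfl
      intro i hi
      simp only [hy, hi, if_true]
      rcases le_or_gt 0 (x i) with h | h
      · rw [if_pos h, abs_of_nonneg h, mul_one]
      · rw [if_neg (not_le.mpr h), abs_of_neg h, mul_neg_one]
    have := le_dualNorm' (x := x) hysupp hynorm
    rwa [hsum, abs_of_nonneg (Finset.sum_nonneg fun i _ => abs_nonneg _)] at this
  · -- dualNorm F x ≤ combNorm H x
    apply dualNorm_le'
    intro y hysupp hynorm
    rcases eq_or_ne x 0 with hx0 | hx0
    · simp [hx0]
    · have hcpos : 0 < combNorm H x := by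
        obtain ⟨n, hn⟩ : ∃ n, x n ≠ 0 := by
          by_contra h
          push_neg at h
          exact hx0 (funext h)
        have := le_combNorm' (F := H) (x := x) (hH.2 n)
        rw [Finset.sum_singleton] at this
        calc (0 : ℝ≥0∞) < ENNReal.ofReal |x n| := by
              rw [ENNReal.ofReal_pos]; positivity
          _ ≤ combNorm H x := this
      have hcfin : combNorm H x < ⊤ :=
        lt_of_le_of_lt (combNorm_finite hx) ENNReal.ofReal_lt_top
      set r : ℝ := (combNorm H x).toReal with hrdef
      have hrpos : 0 < r := ENNReal.toReal_pos hcpos.ne' hcfin.ne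
      set z : ℕ → ℝ := fun n => r⁻¹ * x n with hz
      have hzsupp : (Function.support z).Finite := by
        apply Set.Finite.subset hx
        intro n hn
        simp only [Function.mem_support, hz] at hn ⊢
        intro h
        simp [h] at hn
      have hznorm : combNorm H z ≤ 1 := by
        apply combNorm_le'
        intro S hS
        rw [ENNReal.ofReal_le_one]
        have hSle : ∑ i ∈ S, |x i| ≤ r := by
          have := le_combNorm' (x := x) hS
          rw [hrdef]
          have h2 : ENNReal.ofReal (∑ i ∈ S, |x i|) ≤ ENNReal.ofReal r := by
            rw [hrdef, ENNReal.ofReal_toReal hcfin.ne]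
            exact this
          exact (ENNReal.ofReal_le_ofReal_iff hrpos.le).mp h2
        have : ∑ i ∈ S, |z i| = r⁻¹ * ∑ i ∈ S, |x i| := by
          simp only [hz, abs_mul, abs_inv, abs_of_pos hrpos, ← Finset.mul_sum]
        rw [this, inv_mul_le_iff₀ hrpos, mul_one]
        exact hSle
      -- dualNorm H y ≤ 1 since combNorm F y ≤ 1
      have hydual : dualNorm H y ≤ 1 := (hdual y hysupp) ▸ hynorm
      have hkey : ENNReal.ofReal |∑ᶠ n, y n * z n| ≤ 1 :=
        le_trans (le_dualNorm' (x := y) hzsupp hznorm) hydual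
      have hcomm : ∑ᶠ n, y n * z n = r⁻¹ * ∑ᶠ n, x n * y n := by
        rw [← smul_eq_mul, smul_finsum]
        apply finsum_congr
        intro n
        simp only [hz, smul_eq_mul]
        ring
      rw [hcomm, abs_mul, abs_inv, abs_of_pos hrpos, ENNReal.ofReal_le_one,
        inv_mul_le_iff₀ hrpos, mul_one] at hkey
      calc ENNReal.ofReal |∑ᶠ n, x n * y n| ≤ ENNReal.ofReal r := ENNReal.ofReal_le_ofReal hkey
        _ = combNorm H x := by rw [hrdef, ENNReal.ofReal_toReal hcfin.ne]

theorem stmt_3 (F H : Set (Finset ℕ)) (hF : FHC F) (hH : FHC H)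
    (hdual : ∀ x : ℕ → ℝ, (Function.support x).Finite → combNorm F x = dualNorm H x) :
    H = perp F ∧
    (∀ x : ℕ → ℝ, (Function.support x).Finite → combNorm H x = dualNorm F x) ∧
    F = perp H := by
  have hB := main_dual F H hF hH hdual
  exact ⟨main_perp F H hF hH hdual, hB, main_perp H F hH hF hB⟩
end

section
/- Let 𝓕 ∈ FHC. Then { x ∈ c₀₀ : ‖x‖_𝓕 ≤ 1 } equals the convex hull in ℝ^ℕ of W(𝓕^⊥) if and only if there exists a perfect simple graph G on ℕ with 𝓕 = 𝓒(G), the family of finite cliques of G. -/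
open scoped ENNReal

/-- `W(H)`: the set of `{-1,0,1}`-valued sequences whose support belongs to `H`. -/
def W (H : Set (Finset ℕ)) : Set (ℕ → ℝ) :=
  {σ | (∀ n, σ n = -1 ∨ σ n = 0 ∨ σ n = 1) ∧ ∃ S ∈ H, Function.support σ = ↑S}

/-- The family of finite cliques of a graph on ℕ. -/
def cliques (G : SimpleGraph ℕ) : Set (Finset ℕ) :=
  {C | G.IsClique (C : Set ℕ)}

/-- The chromatic number of a finite graph. -/
noncomputable def chromNum {V : Type*} [Fintype V] (G : SimpleGraph V) : ℕ :=
  sInf {n | G.Colorable n}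

/-- The clique number of a finite graph. -/
noncomputable def cliqNum {V : Type*} [Fintype V] (G : SimpleGraph V) : ℕ :=
  sSup {n | ∃ s : Finset V, G.IsNClique n s}

/-- A graph on ℕ is perfect if on every nonempty finite induced subgraph the chromatic
number equals the clique number. -/
def IsPerfect (G : SimpleGraph ℕ) : Prop :=
  ∀ H : Finset ℕ, H.Nonempty →
    chromNum (G.induce (H : Set ℕ)) = cliqNum (G.induce (H : Set ℕ))

open Finset

/-- `H` is `n`-colorable in `G` (working with ambient functions on ℕ). -/
def col (G : SimpleGraph ℕ) (H : Finset ℕ) (n : ℕ) : Prop :=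
  ∃ f : ℕ → ℕ, (∀ a ∈ H, f a < n) ∧ ∀ a ∈ H, ∀ b ∈ H, G.Adj a b → f a ≠ f b

noncomputable def chrom (G : SimpleGraph ℕ) (H : Finset ℕ) : ℕ := sInf {n | col G H n}

noncomputable def cliq (G : SimpleGraph ℕ) (H : Finset ℕ) : ℕ :=
  sSup {n | ∃ C : Finset ℕ, C ⊆ H ∧ G.IsClique (C : Set ℕ) ∧ C.card = n}

lemma col_mono {G : SimpleGraph ℕ} {H : Finset ℕ} {n m : ℕ} (h : col G H n) (hnm : n ≤ m) :
    col G H m := by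
  obtain ⟨f, h1, h2⟩ := h
  exact ⟨f, fun a ha => lt_of_lt_of_le (h1 a ha) hnm, h2⟩

lemma col_card (G : SimpleGraph ℕ) (H : Finset ℕ) : col G H H.card := by
  classical
  refine ⟨fun a => if h : a ∈ H then (H.equivFin ⟨a, h⟩ : ℕ) else 0, ?_, ?_⟩
  · intro a ha; simp only [dif_pos ha]; exact (H.equivFin ⟨a, ha⟩).2
  · intro a ha b hb hab
    simp only [dif_pos ha, dif_pos hb]
    intro h
    have : (⟨a, ha⟩ : {x // x ∈ H}) = ⟨b, hb⟩ := H.equivFin.injective (Fin.ext h)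
    exact hab.ne (congrArg Subtype.val this)

lemma col_chrom (G : SimpleGraph ℕ) (H : Finset ℕ) : col G H (chrom G H) := by
  have : chrom G H ∈ {n | col G H n} := Nat.sInf_mem ⟨H.card, col_card G H⟩
  exact this

lemma chrom_le {G : SimpleGraph ℕ} {H : Finset ℕ} {n : ℕ} (h : col G H n) : chrom G H ≤ n :=
  Nat.sInf_le (by exact h)

lemma cliq_bdd (G : SimpleGraph ℕ) (H : Finset ℕ) :
    BddAbove {n | ∃ C : Finset ℕ, C ⊆ H ∧ G.IsClique (C : Set ℕ) ∧ C.card = n} := by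
  refine ⟨H.card, fun n hn => ?_⟩
  obtain ⟨C, hC, -, rfl⟩ := hn
  exact card_le_card hC

lemma cliq_nonempty (G : SimpleGraph ℕ) (H : Finset ℕ) :
    Set.Nonempty {n | ∃ C : Finset ℕ, C ⊆ H ∧ G.IsClique (C : Set ℕ) ∧ C.card = n} :=
  ⟨0, ∅, empty_subset _, by simp [SimpleGraph.isClique_empty], card_empty⟩

lemma cliq_mem (G : SimpleGraph ℕ) (H : Finset ℕ) :
    ∃ C : Finset ℕ, C ⊆ H ∧ G.IsClique (C : Set ℕ) ∧ C.card = cliq G H :=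
  Nat.sSup_mem (cliq_nonempty G H) (cliq_bdd G H)

lemma le_cliq {G : SimpleGraph ℕ} {H C : Finset ℕ} (hC : C ⊆ H) (h : G.IsClique (C : Set ℕ)) :
    C.card ≤ cliq G H :=
  le_csSup (cliq_bdd G H) ⟨C, hC, h, rfl⟩

lemma cliq_le {G : SimpleGraph ℕ} {H : Finset ℕ} {n : ℕ}
    (h : ∀ C : Finset ℕ, C ⊆ H → G.IsClique (C : Set ℕ) → C.card ≤ n) : cliq G H ≤ n := by
  refine csSup_le (cliq_nonempty G H) ?_
  rintro m ⟨C, hC, hcl, rfl⟩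
  exact h C hC hcl

lemma cliq_mono {G : SimpleGraph ℕ} {H H' : Finset ℕ} (h : H ⊆ H') : cliq G H ≤ cliq G H' :=
  cliq_le fun C hC hcl => le_cliq (hC.trans h) hcl

lemma cliq_le_chrom (G : SimpleGraph ℕ) (H : Finset ℕ) : cliq G H ≤ chrom G H := by
  classical
  obtain ⟨C, hCH, hcl, hcard⟩ := cliq_mem G H
  obtain ⟨f, hf1, hf2⟩ := col_chrom G H
  rw [← hcard]
  have hinj : Set.InjOn f (C : Set ℕ) := by
    intro a ha b hb hfab
    by_contra hne
    exact hf2 a (hCH ha) b (hCH hb) (hcl ha hb hne) hfab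
  calc C.card = (C.image f).card := (card_image_of_injOn hinj).symm
    _ ≤ (range (chrom G H)).card := card_le_card (by
        intro m hm
        simp only [mem_image] at hm
        obtain ⟨a, ha, rfl⟩ := hm
        exact mem_range.2 (hf1 a (hCH ha)))
    _ = chrom G H := card_range _

section Bridge
variable (G : SimpleGraph ℕ) (H : Finset ℕ)

lemma colorable_iff (n : ℕ) : (G.induce (H : Set ℕ)).Colorable n ↔ col G H n := by
  classical
  constructor
  · rintro ⟨c⟩
    refine ⟨fun a => if h : a ∈ H then (c ⟨a, h⟩ : ℕ) else 0, ?_, ?_⟩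
    · intro a ha; simp only [dif_pos ha]; exact (c ⟨a, ha⟩).2
    · intro a ha b hb hab
      simp only [dif_pos ha, dif_pos hb]
      intro h
      have hadj : (G.induce (H : Set ℕ)).Adj ⟨a, ha⟩ ⟨b, hb⟩ := hab
      exact c.valid hadj (Fin.ext h)
  · rintro ⟨f, hf1, hf2⟩
    refine ⟨SimpleGraph.Coloring.mk (fun v => (⟨f v.1, hf1 v.1 v.2⟩ : Fin n)) ?_⟩
    rintro ⟨a, ha⟩ ⟨b, hb⟩ hadj h
    have : G.Adj a b := by simpa using hadj
    exact hf2 a ha b hb this (congrArg Fin.val h)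

lemma chromNum_eq : chromNum (G.induce (H : Set ℕ)) = chrom G H := by
  unfold chromNum chrom
  congr 1
  ext n
  exact colorable_iff G H n

lemma cliqNum_eq : cliqNum (G.induce (H : Set ℕ)) = cliq G H := by
  classical
  unfold cliqNum cliq
  congr 1
  ext n
  constructor
  · rintro ⟨s, hs⟩
    refine ⟨s.map ⟨Subtype.val, Subtype.val_injective⟩, ?_, ?_, ?_⟩
    · intro a ha
      simp only [mem_map, Function.Embedding.coeFn_mk] at ha
      obtain ⟨⟨a, hmem⟩, -, rfl⟩ := ha
      exact hmem
    · rintro a ha b hb hab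
      simp only [coe_map, Set.mem_image, mem_coe, Function.Embedding.coeFn_mk] at ha hb
      obtain ⟨⟨a, haH⟩, has, rfl⟩ := ha
      obtain ⟨⟨b, hbH⟩, hbs, rfl⟩ := hb
      have hne : (⟨a, haH⟩ : (H : Set ℕ)) ≠ ⟨b, hbH⟩ := fun h => hab (congrArg Subtype.val h)
      have := hs.1 has hbs hne
      simpa using this
    · rw [card_map]; exact hs.2
  · rintro ⟨C, hCH, hcl, rfl⟩
    refine ⟨C.attach.map ⟨fun a => (⟨a.1, hCH a.2⟩ : (H : Set ℕ)), ?_⟩, ?_, ?_⟩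
    · rintro ⟨a, ha⟩ ⟨b, hb⟩ h
      simpa [Subtype.ext_iff] using congrArg Subtype.val h
    · rintro x ha y hb hne
      obtain ⟨aa, haH⟩ := x
      obtain ⟨bb, hbH⟩ := y
      simp only [coe_map, Set.mem_image, mem_coe, Function.Embedding.coeFn_mk, mem_attach,
        true_and, Subtype.exists] at ha hb
      obtain ⟨a', ha', h1⟩ := ha
      obtain ⟨b', hb', h2⟩ := hb
      have ha2 : a' = aa := congrArg Subtype.val h1
      have hb2 : b' = bb := congrArg Subtype.val h2
      subst ha2; subst hb2
      have hab : a' ≠ b' := fun h => hne (Subtype.ext h)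
      exact hcl ha' hb' hab
    · simp
end Bridge

lemma perfect_iff (G : SimpleGraph ℕ) : IsPerfect G ↔ ∀ H : Finset ℕ, chrom G H = cliq G H := by
  constructor
  · intro h H
    rcases H.eq_empty_or_nonempty with rfl | hne
    · have h1 : chrom G ∅ = 0 := Nat.le_zero.1 (chrom_le ⟨id, by simp, by simp⟩)
      have h2 : cliq G ∅ = 0 := Nat.le_zero.1 (cliq_le fun C hC _ => by
        simp [subset_empty.1 hC])
      rw [h1, h2]
    · have := h H hne
      rwa [chromNum_eq, cliqNum_eq] at this
  · intro h H _
    rw [chromNum_eq, cliqNum_eq]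
    exact h H

/-- The unit ball. -/
def Ball (F : Set (Finset ℕ)) : Set (ℕ → ℝ) :=
  {x : ℕ → ℝ | (Function.support x).Finite ∧ combNorm F x ≤ 1}

lemma combNorm_le_one_iff (F : Set (Finset ℕ)) (x : ℕ → ℝ) :
    combNorm F x ≤ 1 ↔ ∀ S ∈ F, (∑ i ∈ S, |x i|) ≤ 1 := by
  unfold combNorm
  rw [iSup₂_le_iff]
  refine forall₂_congr fun S _ => ?_
  rw [← ENNReal.ofReal_one, ENNReal.ofReal_le_ofReal_iff (by norm_num)]

lemma mem_Ball_iff (F : Set (Finset ℕ)) (x : ℕ → ℝ) :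
    x ∈ Ball F ↔ (Function.support x).Finite ∧ ∀ S ∈ F, (∑ i ∈ S, |x i|) ≤ 1 := by
  unfold Ball
  rw [Set.mem_setOf_eq, combNorm_le_one_iff]

lemma convex_Ball (F : Set (Finset ℕ)) : Convex ℝ (Ball F) := by
  rintro x hx y hy a b ha hb hab
  rw [mem_Ball_iff] at hx hy ⊢
  constructor
  · refine Set.Finite.subset (hx.1.union hy.1) ?_
    intro i hi
    simp only [Function.mem_support, Pi.add_apply, Pi.smul_apply, smul_eq_mul] at hi
    by_contra hcon
    simp only [Set.mem_union, Function.mem_support, not_or, not_not] at hcon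
    rw [hcon.1, hcon.2] at hi
    simp at hi
  · intro S hS
    have h1 := hx.2 S hS
    have h2 := hy.2 S hS
    calc ∑ i ∈ S, |(a • x + b • y) i| ≤ ∑ i ∈ S, (a * |x i| + b * |y i|) := by
          refine Finset.sum_le_sum fun i _ => ?_
          simp only [Pi.add_apply, Pi.smul_apply, smul_eq_mul]
          calc |a * x i + b * y i| ≤ |a * x i| + |b * y i| := abs_add_le _ _
            _ = a * |x i| + b * |y i| := by rw [abs_mul, abs_mul, abs_of_nonneg ha, abs_of_nonneg hb]
      _ = a * ∑ i ∈ S, |x i| + b * ∑ i ∈ S, |y i| := by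
          rw [Finset.sum_add_distrib, Finset.mul_sum, Finset.mul_sum]
      _ ≤ a * 1 + b * 1 := by
          gcongr
      _ = 1 := by rw [mul_one, mul_one, hab]

lemma W_subset_Ball (F : Set (Finset ℕ)) : W (perp F) ⊆ Ball F := by
  rintro σ ⟨hval, S, hS, hsupp⟩
  rw [mem_Ball_iff]
  constructor
  · rw [hsupp]; exact S.finite_toSet
  · intro C hC
    classical
    have habs : ∀ i, |σ i| = if σ i ≠ 0 then 1 else 0 := by
      intro i
      rcases hval i with h | h | h <;> simp [h]
    calc ∑ i ∈ C, |σ i| = ∑ i ∈ C, (if σ i ≠ 0 then (1:ℝ) else 0) := by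
          exact Finset.sum_congr rfl fun i _ => habs i
      _ = ((C.filter (fun i => σ i ≠ 0)).card : ℝ) := by
          rw [Finset.sum_ite, Finset.sum_const_zero, Finset.sum_const, add_zero, nsmul_eq_mul, mul_one]
      _ = ((S ∩ C).card : ℝ) := by
          congr 2
          ext i
          simp only [Finset.mem_filter, Finset.mem_inter]
          constructor
          · rintro ⟨hiC, hi⟩
            have : i ∈ Function.support σ := hi
            rw [hsupp] at this
            exact ⟨this, hiC⟩
          · rintro ⟨hiS, hiC⟩
            have : i ∈ Function.support σ := by rw [hsupp]; exact hiS
            exact ⟨hiC, this⟩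
      _ ≤ 1 := by
          have := hS C hC
          exact_mod_cast this

lemma hull_subset_Ball (F : Set (Finset ℕ)) : convexHull ℝ (W (perp F)) ⊆ Ball F :=
  convexHull_min (W_subset_Ball F) (convex_Ball F)

/-- Sum of |σ i| over C equals the size of the intersection of the support with C. -/
lemma sum_abs_W {σ : ℕ → ℝ} (hval : ∀ n, σ n = -1 ∨ σ n = 0 ∨ σ n = 1)
    {S : Finset ℕ} (hsupp : Function.support σ = ↑S) (C : Finset ℕ) :
    ∑ i ∈ C, |σ i| = ((S ∩ C).card : ℝ) := by
  classical
  calc ∑ i ∈ C, |σ i| = ∑ i ∈ C, (if σ i ≠ 0 then (1:ℝ) else 0) := by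
        refine Finset.sum_congr rfl fun i _ => ?_
        rcases hval i with h | h | h <;> simp [h]
    _ = ((C.filter (fun i => σ i ≠ 0)).card : ℝ) := by
        rw [Finset.sum_ite, Finset.sum_const_zero, Finset.sum_const, add_zero, nsmul_eq_mul,
          mul_one]
    _ = ((S ∩ C).card : ℝ) := by
        congr 2
        ext i
        simp only [Finset.mem_filter, Finset.mem_inter]
        constructor
        · rintro ⟨hiC, hi⟩
          have : i ∈ Function.support σ := hi
          rw [hsupp] at this
          exact ⟨this, hiC⟩
        · rintro ⟨hiS, hiC⟩
          have : i ∈ Function.support σ := by rw [hsupp]; exact hiS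
          exact ⟨hiC, this⟩

/-- If all pairs from `C` are in `F`, then a `W (perp F)` element has at most one support
point in `C`. -/
lemma card_support_inter_le {F : Set (Finset ℕ)} {C : Finset ℕ}
    (hC : ∀ a ∈ C, ∀ b ∈ C, a ≠ b → ({a, b} : Finset ℕ) ∈ F)
    {S : Finset ℕ} (hS : S ∈ perp F) : (S ∩ C).card ≤ 1 := by
  classical
  rw [Finset.card_le_one]
  rintro a ha b hb
  by_contra hne
  rw [Finset.mem_inter] at ha hb
  have hpair := hC a ha.2 b hb.2 hne
  have := hS _ hpair
  have hsub : ({a, b} : Finset ℕ) ⊆ S ∩ {a, b} := by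
    intro x hx
    rw [Finset.mem_inter]
    refine ⟨?_, hx⟩
    rcases Finset.mem_insert.1 hx with rfl | hx
    · exact ha.1
    · rw [Finset.mem_singleton] at hx; subst hx; exact hb.1
  have h2 : 2 ≤ (S ∩ ({a, b} : Finset ℕ)).card := by
    calc 2 = ({a, b} : Finset ℕ).card := (Finset.card_pair hne).symm
      _ ≤ _ := Finset.card_le_card hsub
  omega

/-- Linear bound over the convex hull: if all pairs from `C` lie in `F`, then
`∑ i ∈ C, y i ≤ 1` for `y` in the hull. -/
lemma sum_le_one_of_mem_hull {F : Set (Finset ℕ)} {C : Finset ℕ}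
    (hC : ∀ a ∈ C, ∀ b ∈ C, a ≠ b → ({a, b} : Finset ℕ) ∈ F)
    {y : ℕ → ℝ} (hy : y ∈ convexHull ℝ (W (perp F))) : ∑ i ∈ C, y i ≤ 1 := by
  have hconv : Convex ℝ {y : ℕ → ℝ | ∑ i ∈ C, y i ≤ 1} := by
    refine convex_halfSpace_le ?_ 1
    constructor
    · intro a b
      simp only [Pi.add_apply]
      rw [Finset.sum_add_distrib]
    · intro c a
      simp only [Pi.smul_apply, smul_eq_mul]
      rw [Finset.mul_sum]
  have hW : W (perp F) ⊆ {y : ℕ → ℝ | ∑ i ∈ C, y i ≤ 1} := by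
    rintro σ ⟨hval, S, hS, hsupp⟩
    have : ∑ i ∈ C, σ i ≤ ∑ i ∈ C, |σ i| := Finset.sum_le_sum fun i _ => le_abs_self _
    rw [sum_abs_W hval hsupp] at this
    refine this.trans ?_
    have := card_support_inter_le hC hS
    exact_mod_cast this
  exact convexHull_min hW hconv hy

/-- The graph generated by a family: edges are the pairs belonging to the family. -/
def Gr (F : Set (Finset ℕ)) : SimpleGraph ℕ :=
  SimpleGraph.fromRel (fun n m => ({n, m} : Finset ℕ) ∈ F)

lemma Gr_adj {F : Set (Finset ℕ)} {n m : ℕ} :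
    (Gr F).Adj n m ↔ n ≠ m ∧ ({n, m} : Finset ℕ) ∈ F := by
  unfold Gr
  rw [SimpleGraph.fromRel_adj]
  constructor
  · rintro ⟨hne, h | h⟩
    · exact ⟨hne, h⟩
    · rw [Finset.pair_comm]; exact ⟨hne, h⟩
  · rintro ⟨hne, h⟩
    exact ⟨hne, Or.inl h⟩

lemma empty_mem_FHC {F : Set (Finset ℕ)} (hF : FHC F) : ∅ ∈ F :=
  hF.1 (Finset.empty_subset {0}) (hF.2 0)

lemma F_eq_cliques {F : Set (Finset ℕ)} (hF : FHC F)
    (hsub : Ball F ⊆ convexHull ℝ (W (perp F))) : F = cliques (Gr F) := by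
  classical
  have hsub' : ∀ n : ℕ, ∀ C : Finset ℕ, C.card ≤ n → (Gr F).IsClique (C : Set ℕ) → C ∈ F := by
    intro n
    induction n with
    | zero =>
      intro C hc _
      rw [Nat.le_zero, Finset.card_eq_zero] at hc
      subst hc
      exact empty_mem_FHC hF
    | succ n IH =>
      intro C hc hcl
      rcases Nat.lt_or_ge C.card (n+1) with h | h
      · exact IH C (Nat.lt_succ_iff.1 h) hcl
      have hcard : C.card = n + 1 := le_antisymm hc h
      rcases Nat.lt_or_ge (n+1) 3 with h3 | h3
      · -- card ≤ 2
        have hn2 : n < 2 := by omega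
        interval_cases n
        · -- card = 1
          obtain ⟨a, rfl⟩ := Finset.card_eq_one.1 hcard
          exact hF.2 a
        · -- card = 2
          obtain ⟨a, b, hab, rfl⟩ := Finset.card_eq_two.1 hcard
          have ha : a ∈ (({a, b} : Finset ℕ) : Set ℕ) := by simp
          have hb : b ∈ (({a, b} : Finset ℕ) : Set ℕ) := by simp
          exact (Gr_adj.1 (hcl ha hb hab)).2
      · -- card ≥ 3
        by_contra hCF
        set c := C.card with hcdef
        have hc1 : (1:ℝ) ≤ (c:ℝ) - 1 := by
          have : 3 ≤ c := hcard ▸ h3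
          have : (3:ℝ) ≤ (c:ℝ) := by exact_mod_cast this
          linarith
        have hcpos : (0:ℝ) < (c:ℝ) - 1 := by linarith
        set x : ℕ → ℝ := fun i => if i ∈ C then 1/((c:ℝ)-1) else 0 with hxdef
        have hxball : x ∈ Ball F := by
          rw [mem_Ball_iff]
          constructor
          · refine Set.Finite.subset C.finite_toSet fun i hi => ?_
            simp only [Function.mem_support, hxdef] at hi
            by_contra hiC
            simp only [Finset.mem_coe] at hiC
            simp [hiC] at hi
          · intro S hS
            have hSC : (S ∩ C).card ≤ c - 1 := by
              have hmem : S ∩ C ∈ F := hF.1 (Finset.inter_subset_left) hS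
              have hne : S ∩ C ≠ C := fun hEq => hCF (hEq ▸ hmem)
              have hsubC : S ∩ C ⊆ C := Finset.inter_subset_right
              have : (S ∩ C).card < c := Finset.card_lt_card (hsubC.ssubset_of_ne hne)
              omega
            calc ∑ i ∈ S, |x i| = ∑ i ∈ S, (if i ∈ C then 1/((c:ℝ)-1) else 0) := by
                  refine Finset.sum_congr rfl fun i _ => ?_
                  simp only [hxdef]
                  split
                  · rw [abs_of_nonneg (by positivity)]
                  · simp
              _ = ((S ∩ C).card : ℝ) * (1/((c:ℝ)-1)) := by
                  rw [Finset.sum_ite_mem, Finset.sum_const, nsmul_eq_mul]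
              _ ≤ ((c:ℝ) - 1) * (1/((c:ℝ)-1)) := by
                  refine mul_le_mul_of_nonneg_right ?_ (by positivity)
                  have : ((S ∩ C).card : ℝ) ≤ ((c - 1 : ℕ) : ℝ) := by exact_mod_cast hSC
                  refine this.trans ?_
                  have : 3 ≤ c := hcard ▸ h3
                  push_cast [Nat.cast_sub (by omega : 1 ≤ c)]
                  linarith
              _ = 1 := by field_simp
        have hhull := hsub hxball
        have hpairs : ∀ a ∈ C, ∀ b ∈ C, a ≠ b → ({a, b} : Finset ℕ) ∈ F := by
          intro a ha b hb hab
          refine IH {a, b} ?_ (hcl.subset ?_)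
          · rw [Finset.card_pair hab]; omega
          · intro i hi
            simp only [Finset.coe_insert, Set.mem_insert_iff, Finset.coe_singleton,
              Set.mem_singleton_iff] at hi
            rcases hi with rfl | rfl <;> simpa
        have hle := sum_le_one_of_mem_hull hpairs hhull
        have hsum : ∑ i ∈ C, x i = (c:ℝ) * (1/((c:ℝ)-1)) := by
          have hxval : ∀ i ∈ C, x i = 1/((c:ℝ)-1) := fun i hi => by simp [hxdef, hi]
          rw [Finset.sum_congr rfl hxval, Finset.sum_const, nsmul_eq_mul]
        rw [hsum] at hle
        have : (c:ℝ) ≤ (c:ℝ) - 1 := by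
          have h1 : (c:ℝ) * (1/((c:ℝ)-1)) = (c:ℝ)/((c:ℝ)-1) := by ring
          rw [h1, div_le_one hcpos] at hle
          linarith
        linarith
  ext C
  constructor
  · intro hC
    intro a ha b hb hab
    rw [Gr_adj]
    refine ⟨hab, hF.1 ?_ hC⟩
    intro i hi
    rcases Finset.mem_insert.1 hi with rfl | hi
    · exact ha
    · rw [Finset.mem_singleton] at hi; subst hi; exact hb
  · intro hC
    exact hsub' C.card C le_rfl hC

/-- If the ball is contained in the hull and `F` is the clique family of `Gr F`, then
`Gr F` satisfies χ = ω on every finite set. -/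
lemma forward_perfect {F : Set (Finset ℕ)} (hF : FHC F)
    (hsub : Ball F ⊆ convexHull ℝ (W (perp F))) (hFeq : F = cliques (Gr F)) :
    ∀ H : Finset ℕ, chrom (Gr F) H = cliq (Gr F) H := by
  classical
  have main : ∀ n : ℕ, ∀ H : Finset ℕ, H.card ≤ n → chrom (Gr F) H = cliq (Gr F) H := by
    intro n
    induction n with
    | zero =>
      intro H hc
      rw [Nat.le_zero, Finset.card_eq_zero] at hc
      subst hc
      have h1 : chrom (Gr F) ∅ = 0 := Nat.le_zero.1 (chrom_le ⟨id, by simp, by simp⟩)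
      have h2 : cliq (Gr F) ∅ = 0 := Nat.le_zero.1 (cliq_le fun C hC _ => by
        simp [Finset.subset_empty.1 hC])
      rw [h1, h2]
    | succ n IH =>
      intro H hc
      rcases Nat.lt_or_ge H.card (n+1) with hlt | hge
      · exact IH H (Nat.lt_succ_iff.1 hlt)
      have hcard : H.card = n + 1 := le_antisymm hc hge
      have hne : H.Nonempty := Finset.card_pos.1 (by omega)
      set ω := cliq (Gr F) H with hω
      have hω1 : 1 ≤ ω := by
        obtain ⟨a, ha⟩ := hne
        have : ({a} : Finset ℕ).card ≤ ω :=
          le_cliq (Finset.singleton_subset_iff.2 ha) (by simp)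
        simpa using this
      refine le_antisymm ?_ (cliq_le_chrom _ _)
      -- the vector x = 1/ω on H
      set x : ℕ → ℝ := fun i => if i ∈ H then 1/(ω:ℝ) else 0 with hxdef
      have hωpos : (0:ℝ) < (ω:ℝ) := by exact_mod_cast hω1
      have hxball : x ∈ Ball F := by
        rw [mem_Ball_iff]
        constructor
        · refine Set.Finite.subset H.finite_toSet fun i hi => ?_
          simp only [Function.mem_support, hxdef] at hi
          by_contra hiH
          simp only [Finset.mem_coe] at hiH
          simp [hiH] at hi
        · intro S hS
          have hScl : (Gr F).IsClique (S : Set ℕ) := by rw [hFeq] at hS; exact hS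
          have hSH : (S ∩ H).card ≤ ω := by
            refine le_cliq Finset.inter_subset_right (hScl.subset ?_)
            exact_mod_cast (Finset.inter_subset_left : S ∩ H ⊆ S)
          calc ∑ i ∈ S, |x i| = ∑ i ∈ S, (if i ∈ H then 1/(ω:ℝ) else 0) := by
                refine Finset.sum_congr rfl fun i _ => ?_
                simp only [hxdef]
                split
                · rw [abs_of_nonneg (by positivity)]
                · simp
            _ = ((S ∩ H).card : ℝ) * (1/(ω:ℝ)) := by
                rw [Finset.sum_ite_mem, Finset.sum_const, nsmul_eq_mul]
            _ ≤ (ω:ℝ) * (1/(ω:ℝ)) := by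
                refine mul_le_mul_of_nonneg_right ?_ (by positivity)
                exact_mod_cast hSH
            _ = 1 := by field_simp
      obtain ⟨ι, hι, w, z, hw0, hw1, hz, hxsum⟩ := mem_convexHull_iff_exists_fintype.1
        (hsub hxball)
      -- pick an index with positive weight
      have hex : ∃ j, 0 < w j := by
        by_contra hcon
        push_neg at hcon
        have : ∀ j, w j = 0 := fun j => le_antisymm (hcon j) (hw0 j)
        rw [Finset.sum_congr rfl (fun j _ => this j)] at hw1
        simp at hw1
      obtain ⟨j0, hj0⟩ := hex
      obtain ⟨hval, Sσ, hSσ, hsuppσ⟩ := hz j0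
      set σ := z j0 with hσdef
      -- the key claim: the support of σ meets every maximum clique of H
      have hclaim : ∀ C : Finset ℕ, C ⊆ H → (Gr F).IsClique (C : Set ℕ) → C.card = ω →
          ∃ i ∈ C, i ∈ Sσ := by
        intro C hCH hCcl hCcard
        have hpairs : ∀ a ∈ C, ∀ b ∈ C, a ≠ b → ({a, b} : Finset ℕ) ∈ F := by
          intro a ha b hb hab
          rw [hFeq]
          refine hCcl.subset ?_
          intro i hi
          simp only [Finset.coe_insert, Set.mem_insert_iff, Finset.coe_singleton,
            Set.mem_singleton_iff] at hi
          rcases hi with rfl | rfl <;> simpa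
        have ht_le : ∀ j, ∑ i ∈ C, z j i ≤ 1 := fun j =>
          sum_le_one_of_mem_hull hpairs (subset_convexHull ℝ _ (hz j))
        have hxC : ∑ i ∈ C, x i = 1 := by
          have hxval : ∀ i ∈ C, x i = 1/(ω:ℝ) := fun i hi => by simp [hxdef, hCH hi]
          rw [Finset.sum_congr rfl hxval, Finset.sum_const, nsmul_eq_mul, hCcard]
          field_simp
        have hswap : ∑ i ∈ C, x i = ∑ j, w j * (∑ i ∈ C, z j i) := by
          have hxi : ∀ i, x i = ∑ j, w j * z j i := by
            intro i
            have := congrFun hxsum i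
            simpa [Finset.sum_apply] using this.symm
          rw [Finset.sum_congr rfl fun i _ => hxi i, Finset.sum_comm]
          exact Finset.sum_congr rfl fun j _ => (Finset.mul_sum _ _ _).symm
        have hzero : ∑ j, w j * (1 - ∑ i ∈ C, z j i) = 0 := by
          have : ∑ j, w j * (1 - ∑ i ∈ C, z j i)
              = ∑ j, w j - ∑ j, w j * (∑ i ∈ C, z j i) := by
            rw [← Finset.sum_sub_distrib]
            exact Finset.sum_congr rfl fun j _ => by ring
          rw [this, hw1, ← hswap, hxC, sub_self]
        have hterm : w j0 * (1 - ∑ i ∈ C, z j0 i) = 0 := by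
          have hnn : ∀ j ∈ Finset.univ, 0 ≤ w j * (1 - ∑ i ∈ C, z j i) :=
            fun j _ => mul_nonneg (hw0 j) (by linarith [ht_le j])
          exact (Finset.sum_eq_zero_iff_of_nonneg hnn).1 hzero j0 (Finset.mem_univ _)
        have htσ : ∑ i ∈ C, σ i = 1 := by
          rcases mul_eq_zero.1 hterm with h | h
          · exact absurd h (ne_of_gt hj0)
          · have : ∑ i ∈ C, z j0 i = 1 := by linarith
            simpa [hσdef] using this
        by_contra hcon
        push_neg at hcon
        have : ∀ i ∈ C, σ i = 0 := by
          intro i hi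
          by_contra hne0
          exact hcon i hi (by rw [← Finset.mem_coe, ← hsuppσ]; exact hne0)
        rw [Finset.sum_congr rfl this] at htσ
        simp at htσ
      -- the stable set S
      set S : Finset ℕ := Sσ ∩ H with hSdef
      have hstable : ∀ a ∈ S, ∀ b ∈ S, a ≠ b → ¬ (Gr F).Adj a b := by
        intro a ha b hb hab hadj
        have hpair : ({a, b} : Finset ℕ) ∈ F := (Gr_adj.1 hadj).2
        have := hSσ _ hpair
        have hsub2 : ({a, b} : Finset ℕ) ⊆ Sσ ∩ {a, b} := by
          intro i hi
          rw [Finset.mem_inter]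
          refine ⟨?_, hi⟩
          rcases Finset.mem_insert.1 hi with rfl | hi
          · exact (Finset.mem_inter.1 (hSdef ▸ ha)).1
          · rw [Finset.mem_singleton] at hi; subst hi
            exact (Finset.mem_inter.1 (hSdef ▸ hb)).1
        have h2 : 2 ≤ (Sσ ∩ ({a, b} : Finset ℕ)).card :=
          le_trans (by rw [Finset.card_pair hab]) (Finset.card_le_card hsub2)
        omega
      -- S is nonempty, H' = H \ S is smaller
      obtain ⟨Cmax, hCmaxH, hCmaxcl, hCmaxcard⟩ := cliq_mem (Gr F) H
      obtain ⟨i0, hi0C, hi0S⟩ := hclaim Cmax hCmaxH hCmaxcl hCmaxcard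
      have hi0 : i0 ∈ S := Finset.mem_inter.2 ⟨hi0S, hCmaxH hi0C⟩
      set H' : Finset ℕ := H \ S with hH'def
      have hH'sub : H' ⊆ H := Finset.sdiff_subset
      have hH'card : H'.card ≤ n := by
        have hlt : H'.card < H.card := by
          refine Finset.card_lt_card ⟨hH'sub, fun hsub2 => ?_⟩
          have := hsub2 (hCmaxH hi0C)
          rw [hH'def, Finset.mem_sdiff] at this
          exact this.2 hi0
        omega
      have hcliqH' : cliq (Gr F) H' ≤ ω - 1 := by
        refine cliq_le fun C hCH' hCcl => ?_
        have hCH : C ⊆ H := hCH'.trans hH'sub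
        have hle : C.card ≤ ω := le_cliq hCH hCcl
        rcases eq_or_lt_of_le hle with hEq | hlt
        · obtain ⟨i, hiC, hiS⟩ := hclaim C hCH hCcl hEq
          have hi' : i ∈ H' := hCH' hiC
          rw [hH'def, Finset.mem_sdiff] at hi'
          exact absurd (Finset.mem_inter.2 ⟨hiS, hCH hiC⟩) hi'.2
        · omega
      have hchromH' : chrom (Gr F) H' ≤ ω - 1 := by
        rw [IH H' hH'card]
        exact hcliqH'
      obtain ⟨g, hg1, hg2⟩ := col_mono (col_chrom (Gr F) H') hchromH'
      refine chrom_le ⟨fun a => if a ∈ S then ω - 1 else g a, ?_, ?_⟩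
      · intro a ha
        by_cases haS : a ∈ S
        · simp only [if_pos haS]
          omega
        · simp only [if_neg haS]
          have : a ∈ H' := by rw [hH'def, Finset.mem_sdiff]; exact ⟨ha, haS⟩
          have := hg1 a this
          omega
      · intro a ha b hb hadj
        have haH' : a ∉ S → a ∈ H' := fun h => by
          rw [hH'def, Finset.mem_sdiff]; exact ⟨ha, h⟩
        have hbH' : b ∉ S → b ∈ H' := fun h => by
          rw [hH'def, Finset.mem_sdiff]; exact ⟨hb, h⟩
        by_cases haS : a ∈ S <;> by_cases hbS : b ∈ S
        · exact absurd hadj (hstable a haS b hbS hadj.ne)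
        · simp only [if_pos haS, if_neg hbS]
          have := hg1 b (hbH' hbS)
          omega
        · simp only [if_neg haS, if_pos hbS]
          have := hg1 a (haH' haS)
          omega
        · simp only [if_neg haS, if_neg hbS]
          exact hg2 a (haH' haS) b (hbH' hbS) hadj
  intro H
  exact main H.card H le_rfl

/-- Transferring chrom and cliq along an adjacency-preserving injection. -/
lemma chrom_cliq_map {Γ Δ : SimpleGraph ℕ} {A : Finset ℕ} (φ : ℕ → ℕ)
    (hinj : Set.InjOn φ (A : Set ℕ))
    (hadj : ∀ a ∈ A, ∀ b ∈ A, (Γ.Adj a b ↔ Δ.Adj (φ a) (φ b))) :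
    chrom Γ A = chrom Δ (A.image φ) ∧ cliq Γ A = cliq Δ (A.image φ) := by
  classical
  set B := A.image φ with hB
  have hmem : ∀ a ∈ A, φ a ∈ B := fun a ha => Finset.mem_image_of_mem φ ha
  set ψ := Function.invFunOn φ (A : Set ℕ) with hψ
  have hψmem : ∀ b ∈ B, ψ b ∈ A ∧ φ (ψ b) = b := by
    intro b hb
    obtain ⟨a, ha, rfl⟩ := Finset.mem_image.1 hb
    have hex : ∃ x ∈ (A : Set ℕ), φ x = φ a := ⟨a, by simpa using ha, rfl⟩
    exact ⟨by simpa using Function.invFunOn_mem hex, Function.invFunOn_eq hex⟩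
  have hψφ : ∀ a ∈ A, ψ (φ a) = a := by
    intro a ha
    have := (hψmem (φ a) (hmem a ha)).2
    exact hinj (by simpa using (hψmem (φ a) (hmem a ha)).1) (by simpa using ha) this
  constructor
  · -- chrom
    refine le_antisymm ?_ ?_
    · obtain ⟨f, hf1, hf2⟩ := col_chrom Δ B
      refine chrom_le ⟨f ∘ φ, fun a ha => hf1 _ (hmem a ha), ?_⟩
      intro a ha b hb hab
      exact hf2 _ (hmem a ha) _ (hmem b hb) ((hadj a ha b hb).1 hab)
    · obtain ⟨f, hf1, hf2⟩ := col_chrom Γ A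
      refine chrom_le ⟨f ∘ ψ, fun b hb => hf1 _ (hψmem b hb).1, ?_⟩
      intro a ha b hb hab
      have ha' := hψmem a ha
      have hb' := hψmem b hb
      refine hf2 _ ha'.1 _ hb'.1 ?_
      refine (hadj _ ha'.1 _ hb'.1).2 ?_
      rw [ha'.2, hb'.2]
      exact hab
  · -- cliq
    refine le_antisymm ?_ ?_
    · obtain ⟨C, hCA, hCcl, hCcard⟩ := cliq_mem Γ A
      rw [← hCcard]
      have : (C.image φ).card = C.card := Finset.card_image_of_injOn (hinj.mono (by
        exact_mod_cast hCA))
      rw [← this]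
      refine le_cliq (Finset.image_subset_image hCA) ?_
      rintro x hx y hy hxy
      simp only [Finset.coe_image, Set.mem_image, Finset.mem_coe] at hx hy
      obtain ⟨a, ha, rfl⟩ := hx
      obtain ⟨b, hb, rfl⟩ := hy
      have hab : a ≠ b := fun h => hxy (by rw [h])
      exact (hadj a (hCA ha) b (hCA hb)).1 (hCcl ha hb hab)
    · obtain ⟨C, hCB, hCcl, hCcard⟩ := cliq_mem Δ B
      rw [← hCcard]
      have hinj2 : Set.InjOn ψ (C : Set ℕ) := by
        intro x hx y hy h
        have hx' := hψmem x (hCB hx)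
        have hy' := hψmem y (hCB hy)
        rw [← hx'.2, ← hy'.2, h]
      have : (C.image ψ).card = C.card := Finset.card_image_of_injOn hinj2
      rw [← this]
      refine le_cliq ?_ ?_
      · intro a ha
        obtain ⟨x, hx, rfl⟩ := Finset.mem_image.1 ha
        exact (hψmem x (hCB hx)).1
      · rintro a ha b hb hab
        simp only [Finset.coe_image, Set.mem_image, Finset.mem_coe] at ha hb
        obtain ⟨x, hx, rfl⟩ := ha
        obtain ⟨y, hy, rfl⟩ := hb
        have hx' := hψmem x (hCB hx)
        have hy' := hψmem y (hCB hy)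
        have hxy : x ≠ y := fun h => hab (by rw [h])
        refine (hadj _ hx'.1 _ hy'.1).2 ?_
        rw [hx'.2, hy'.2]
        exact hCcl hx hy hxy

/-- Lovász's duplication lemma, finitary form. -/
lemma dup_chrom {Γ : SimpleGraph ℕ} {K : Finset ℕ} {v w : ℕ}
    (hv : v ∈ K) (hw : w ∉ K) (hvw : Γ.Adj v w)
    (hdup : ∀ u ∈ K, u ≠ v → (Γ.Adj w u ↔ Γ.Adj v u))
    (hperf : ∀ K' ⊆ K, chrom Γ K' = cliq Γ K') :
    chrom Γ (insert w K) = cliq Γ (insert w K) := by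
  classical
  set ω0 := cliq Γ K with hω0
  set ωK := cliq Γ (insert w K) with hωK
  have hω0K : ω0 ≤ ωK := cliq_mono (Finset.subset_insert w K)
  have hω01 : 1 ≤ ω0 := by
    have : ({v} : Finset ℕ).card ≤ ω0 := le_cliq (Finset.singleton_subset_iff.2 hv) (by simp)
    simpa using this
  have hωK1 : ωK ≤ ω0 + 1 := by
    refine cliq_le fun C hC hCcl => ?_
    have h1 : C.erase w ⊆ K := by
      intro a ha
      rw [Finset.mem_erase] at ha
      rcases Finset.mem_insert.1 (hC ha.2) with h | h
      · exact absurd h ha.1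
      · exact h
    have h2 : (C.erase w).card ≤ ω0 := le_cliq h1 (hCcl.subset (by
      exact_mod_cast (Finset.erase_subset w C)))
    have := Finset.card_erase_add_one (a := w) (s := C)
    rcases Finset.decidableMem w C with hwC | hwC
    · have : C.card = (C.erase w).card := by rw [Finset.erase_eq_of_notMem hwC]
      omega
    · have h3 := Finset.card_erase_add_one hwC
      omega
  refine le_antisymm ?_ (cliq_le_chrom _ _)
  rcases eq_or_lt_of_le hω0K with hcase | hcase
  · -- ωK = ω0 : the hard case
    -- v is in no maximum clique of K
    have hvno : ∀ C ⊆ K, Γ.IsClique (C : Set ℕ) → C.card = ω0 → v ∉ C := by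
      intro C hCK hCcl hCcard hvC
      have hwC : w ∉ C := fun h => hw (hCK h)
      have hcl2 : Γ.IsClique ((insert w C : Finset ℕ) : Set ℕ) := by
        intro a ha b hb hab
        simp only [Finset.coe_insert, Set.mem_insert_iff, Finset.mem_coe] at ha hb
        rcases ha with rfl | ha <;> rcases hb with rfl | hb
        · exact absurd rfl hab
        · -- a = w, b ∈ C
          rcases eq_or_ne b v with rfl | hbv
          · exact hvw.symm
          · exact (hdup b (hCK hb) hbv).2 (hCcl hvC hb (Ne.symm hbv))
        · rcases eq_or_ne a v with rfl | hav
          · exact hvw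
          · exact ((hdup a (hCK ha) hav).2 (hCcl hvC ha (Ne.symm hav))).symm
        · exact hCcl ha hb hab
      have : (insert w C).card ≤ ωK :=
        le_cliq (Finset.insert_subset_insert w hCK) hcl2
      rw [Finset.card_insert_of_notMem hwC, hCcard] at this
      omega
    have hchromK : chrom Γ K = ω0 := hperf K Finset.Subset.rfl
    obtain ⟨f, hf1, hf2⟩ := col_chrom Γ K
    rw [hchromK] at hf1
    set S := K.filter (fun u => f u = f v) with hS
    have hvS : v ∈ S := by simp [hS, hv]
    set K1 := K \ (S.erase v) with hK1
    have hK1K : K1 ⊆ K := Finset.sdiff_subset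
    have hcliqK1 : cliq Γ K1 ≤ ω0 - 1 := by
      refine cliq_le fun C hCK1 hCcl => ?_
      have hCK : C ⊆ K := hCK1.trans hK1K
      have hle : C.card ≤ ω0 := le_cliq hCK hCcl
      rcases eq_or_lt_of_le hle with hEq | hlt
      · exfalso
        have hvC : v ∉ C := hvno C hCK hCcl hEq
        have hinjC : Set.InjOn f (C : Set ℕ) := by
          intro a ha b hb hfab
          by_contra hne
          exact hf2 a (hCK ha) b (hCK hb) (hCcl ha hb hne) hfab
        have himage : C.image f = Finset.range ω0 := by
          refine Finset.eq_of_subset_of_card_le ?_ ?_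
          · intro m hm
            obtain ⟨a, ha, rfl⟩ := Finset.mem_image.1 hm
            exact Finset.mem_range.2 (hf1 a (hCK ha))
          · rw [Finset.card_range, Finset.card_image_of_injOn hinjC, hEq]
        have hfv : f v ∈ C.image f := by
          rw [himage]
          exact Finset.mem_range.2 (hf1 v hv)
        obtain ⟨u, huC, hufv⟩ := Finset.mem_image.1 hfv
        have huS : u ∈ S := Finset.mem_filter.2 ⟨hCK huC, hufv⟩
        have huv : u ≠ v := fun h => hvC (h ▸ huC)
        have : u ∉ K1 := by
          rw [hK1, Finset.mem_sdiff]
          push_neg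
          intro _
          exact Finset.mem_erase.2 ⟨huv, huS⟩
        exact this (hCK1 huC)
      · omega
    have hchromK1 : chrom Γ K1 ≤ ω0 - 1 := by
      rw [hperf K1 hK1K]
      exact hcliqK1
    obtain ⟨g, hg1, hg2⟩ := col_mono (col_chrom Γ K1) hchromK1
    rw [← hcase]
    refine chrom_le ⟨fun a => if a = w ∨ a ∈ S.erase v then ω0 - 1 else g a, ?_, ?_⟩
    · intro a ha
      by_cases hclass : a = w ∨ a ∈ S.erase v
      · simp only [if_pos hclass]; omega
      · simp only [if_neg hclass]
        push_neg at hclass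
        have haK1 : a ∈ K1 := by
          rw [hK1, Finset.mem_sdiff]
          rcases Finset.mem_insert.1 ha with rfl | h
          · exact absurd rfl hclass.1
          · exact ⟨h, hclass.2⟩
        have := hg1 a haK1
        omega
    · intro a ha b hb hadj
      have hSadj : ∀ x ∈ S.erase v, ¬ Γ.Adj v x := by
        intro x hx
        rw [Finset.mem_erase, hS, Finset.mem_filter] at hx
        intro hadj2
        exact hf2 v hv x hx.2.1 hadj2 hx.2.2.symm
      have hclassfact : ∀ x ∈ insert w K, ∀ y ∈ insert w K,
          (x = w ∨ x ∈ S.erase v) → (y = w ∨ y ∈ S.erase v) → ¬ Γ.Adj x y := by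
        rintro x hxK y hyK (rfl | hx) (rfl | hy) hadj2
        · exact Γ.irrefl hadj2
        · -- x = w, y ∈ S.erase v
          have hy' := Finset.mem_erase.1 hy
          have hyS := Finset.mem_filter.1 hy'.2
          exact hSadj y hy ((hdup y hyS.1 hy'.1).1 hadj2)
        · have hx' := Finset.mem_erase.1 hx
          have hxS := Finset.mem_filter.1 hx'.2
          exact hSadj x hx ((hdup x hxS.1 hx'.1).1 hadj2.symm)
        · have hx' := Finset.mem_erase.1 hx
          have hy' := Finset.mem_erase.1 hy
          have hxS := Finset.mem_filter.1 hx'.2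
          have hyS := Finset.mem_filter.1 hy'.2
          exact hf2 x hxS.1 y hyS.1 hadj2 (by rw [hxS.2, hyS.2])
      by_cases hac : a = w ∨ a ∈ S.erase v <;> by_cases hbc : b = w ∨ b ∈ S.erase v
      · exact absurd hadj (hclassfact a ha b hb hac hbc)
      · simp only [if_pos hac, if_neg hbc]
        push_neg at hbc
        have hbK1 : b ∈ K1 := by
          rw [hK1, Finset.mem_sdiff]
          rcases Finset.mem_insert.1 hb with rfl | h
          · exact absurd rfl hbc.1
          · exact ⟨h, hbc.2⟩
        have := hg1 b hbK1
        omega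
      · simp only [if_neg hac, if_pos hbc]
        push_neg at hac
        have haK1 : a ∈ K1 := by
          rw [hK1, Finset.mem_sdiff]
          rcases Finset.mem_insert.1 ha with rfl | h
          · exact absurd rfl hac.1
          · exact ⟨h, hac.2⟩
        have := hg1 a haK1
        omega
      · simp only [if_neg hac, if_neg hbc]
        push_neg at hac; push_neg at hbc
        have haK1 : a ∈ K1 := by
          rw [hK1, Finset.mem_sdiff]
          rcases Finset.mem_insert.1 ha with rfl | h
          · exact absurd rfl hac.1
          · exact ⟨h, hac.2⟩
        have hbK1 : b ∈ K1 := by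
          rw [hK1, Finset.mem_sdiff]
          rcases Finset.mem_insert.1 hb with rfl | h
          · exact absurd rfl hbc.1
          · exact ⟨h, hbc.2⟩
        exact hg2 a haK1 b hbK1 hadj
  · -- ωK = ω0 + 1 : color w with a fresh color
    have hoK : ωK = ω0 + 1 := by omega
    have hchromK : chrom Γ K = ω0 := hperf K Finset.Subset.rfl
    obtain ⟨f, hf1, hf2⟩ := col_chrom Γ K
    rw [hchromK] at hf1
    rw [hoK]
    refine chrom_le ⟨fun a => if a = w then ω0 else f a, ?_, ?_⟩
    · intro a ha
      by_cases haw : a = w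
      · simp [haw]
      · simp only [if_neg haw]
        have : a ∈ K := by
          rcases Finset.mem_insert.1 ha with rfl | h
          · exact absurd rfl haw
          · exact h
        have := hf1 a this
        omega
    · intro a ha b hb hadj
      by_cases haw : a = w <;> by_cases hbw : b = w
      · subst haw; subst hbw; exact absurd hadj (Γ.irrefl)
      · simp only [if_pos haw, if_neg hbw]
        have hbK : b ∈ K := by
          rcases Finset.mem_insert.1 hb with rfl | h
          · exact absurd rfl hbw
          · exact h
        have := hf1 b hbK
        omega
      · simp only [if_neg haw, if_pos hbw]
        have haK : a ∈ K := by
          rcases Finset.mem_insert.1 ha with rfl | h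
          · exact absurd rfl haw
          · exact h
        have := hf1 a haK
        omega
      · simp only [if_neg haw, if_neg hbw]
        have haK : a ∈ K := by
          rcases Finset.mem_insert.1 ha with rfl | h
          · exact absurd rfl haw
          · exact h
        have hbK : b ∈ K := by
          rcases Finset.mem_insert.1 hb with rfl | h
          · exact absurd rfl hbw
          · exact h
        exact hf2 a haK b hbK hadj

/-- The full replication graph of `G`, on pair codes. -/
def RepG (G : SimpleGraph ℕ) : SimpleGraph ℕ :=
  SimpleGraph.fromRel (fun n m =>
    (Nat.unpair n).1 = (Nat.unpair m).1 ∨ G.Adj (Nat.unpair n).1 (Nat.unpair m).1)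

lemma RepG_adj {G : SimpleGraph ℕ} {n m : ℕ} :
    (RepG G).Adj n m ↔ n ≠ m ∧
      ((Nat.unpair n).1 = (Nat.unpair m).1 ∨ G.Adj (Nat.unpair n).1 (Nat.unpair m).1) := by
  unfold RepG
  rw [SimpleGraph.fromRel_adj]
  constructor
  · rintro ⟨hne, h | h⟩
    · exact ⟨hne, h⟩
    · rcases h with h | h
      · exact ⟨hne, Or.inl h.symm⟩
      · exact ⟨hne, Or.inr h.symm⟩
  · rintro ⟨hne, h⟩
    exact ⟨hne, Or.inl h⟩

/-- Replication preserves perfection. -/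
lemma rep_perfect {G : SimpleGraph ℕ} (hperf : ∀ H : Finset ℕ, chrom G H = cliq G H) :
    ∀ K : Finset ℕ, chrom (RepG G) K = cliq (RepG G) K := by
  classical
  have main : ∀ n : ℕ, ∀ K : Finset ℕ, K.card ≤ n → chrom (RepG G) K = cliq (RepG G) K := by
    intro n
    induction n with
    | zero =>
      intro K hc
      rw [Nat.le_zero, Finset.card_eq_zero] at hc
      subst hc
      have h1 : chrom (RepG G) ∅ = 0 := Nat.le_zero.1 (chrom_le ⟨id, by simp, by simp⟩)
      have h2 : cliq (RepG G) ∅ = 0 := Nat.le_zero.1 (cliq_le fun C hC _ => by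
        simp [Finset.subset_empty.1 hC])
      rw [h1, h2]
    | succ n IH =>
      intro K hc
      rcases Nat.lt_or_ge K.card (n+1) with hlt | hge
      · exact IH K (Nat.lt_succ_iff.1 hlt)
      have hcard : K.card = n + 1 := le_antisymm hc hge
      by_cases hdup : ∃ v ∈ K, ∃ w ∈ K, v ≠ w ∧ (Nat.unpair v).1 = (Nat.unpair w).1
      · obtain ⟨v, hv, w, hw, hvw, hfst⟩ := hdup
        set K0 := K.erase w with hK0
        have hvK0 : v ∈ K0 := Finset.mem_erase.2 ⟨hvw, hv⟩
        have hwK0 : w ∉ K0 := Finset.notMem_erase w K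
        have hins : insert w K0 = K := Finset.insert_erase hw
        have hadjvw : (RepG G).Adj v w := RepG_adj.2 ⟨hvw, Or.inl hfst⟩
        have hdup2 : ∀ u ∈ K0, u ≠ v → ((RepG G).Adj w u ↔ (RepG G).Adj v u) := by
          intro u hu huv
          have hwu : w ≠ u := fun h => hwK0 (h ▸ hu)
          have hvu : v ≠ u := Ne.symm huv
          rw [RepG_adj, RepG_adj, hfst]
          constructor
          · rintro ⟨-, h⟩; exact ⟨hvu, h⟩
          · rintro ⟨-, h⟩; exact ⟨hwu, h⟩
        have hperf' : ∀ K' ⊆ K0, chrom (RepG G) K' = cliq (RepG G) K' := by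
          intro K' hK'
          refine IH K' ?_
          have h1 : K'.card ≤ K0.card := Finset.card_le_card hK'
          have h2 : K0.card = K.card - 1 := Finset.card_erase_of_mem hw
          omega
        have := dup_chrom hvK0 hwK0 hadjvw hdup2 hperf'
        rwa [hins] at this
      · push_neg at hdup
        set φ := fun a => (Nat.unpair a).1 with hφ
        have hinj : Set.InjOn φ (K : Set ℕ) := by
          intro a ha b hb h
          by_contra hne
          exact hne (by_contra fun h2 => h2 (by
            exact absurd h (by
              intro hEq
              exact (hdup a (by simpa using ha) b (by simpa using hb) hne) hEq)))
        have hadj : ∀ a ∈ K, ∀ b ∈ K, ((RepG G).Adj a b ↔ G.Adj (φ a) (φ b)) := by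
          intro a ha b hb
          rw [RepG_adj]
          constructor
          · rintro ⟨hne, h | h⟩
            · exact absurd h (hdup a ha b hb hne)
            · exact h
          · intro h
            have hne : a ≠ b := fun hEq => G.irrefl (hEq ▸ h)
            exact ⟨hne, Or.inr h⟩
        obtain ⟨h1, h2⟩ := chrom_cliq_map φ hinj hadj
        rw [h1, h2, hperf]
  intro K
  exact main K.card K le_rfl

/-- Rational points of the ball lie in the hull (via replication + coloring). -/
lemma rat_mem_hull {F : Set (Finset ℕ)} {G : SimpleGraph ℕ}
    (hFeq : F = cliques G) (hperf : ∀ H : Finset ℕ, chrom G H = cliq G H)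
    (E : Finset ℕ) (ε : ℕ → ℝ) (hε : ∀ i ∈ E, ε i = 1 ∨ ε i = -1)
    (y : ℕ → ℕ) (hy0 : ∀ i ∉ E, y i = 0)
    (q : ℕ) (hq : 0 < q)
    (hclq : ∀ C ∈ F, ∑ i ∈ C ∩ E, y i ≤ q) :
    (fun i => ε i * ((y i : ℝ) / (q:ℝ))) ∈
      convexHull ℝ {σ | σ ∈ W (perp F) ∧ Function.support σ ⊆ ↑E} := by
  classical
  set K' : Finset ℕ := E.biUnion (fun i => (Finset.range (y i)).image (Nat.pair i)) with hK'
  have hmemK' : ∀ n, n ∈ K' ↔ ∃ i ∈ E, ∃ a < y i, Nat.pair i a = n := by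
    intro n
    simp only [hK', Finset.mem_biUnion, Finset.mem_image, Finset.mem_range]
  have hcliqK' : cliq (RepG G) K' ≤ q := by
    refine cliq_le fun C' hC' hC'cl => ?_
    set φ := fun n => (Nat.unpair n).1 with hφ
    set C := C'.image φ with hC
    have hCE : C ⊆ E := by
      intro i hi
      obtain ⟨m, hm, rfl⟩ := Finset.mem_image.1 hi
      obtain ⟨i', hi', a, ha, rfl⟩ := (hmemK' m).1 (hC' hm)
      simpa [hφ, Nat.unpair_pair] using hi'
    have hCcl : G.IsClique (C : Set ℕ) := by
      rintro i hi j hj hij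
      simp only [hC, Finset.coe_image, Set.mem_image, Finset.mem_coe] at hi hj
      obtain ⟨m, hm, rfl⟩ := hi
      obtain ⟨m', hm', rfl⟩ := hj
      have hmm : m ≠ m' := fun h => hij (by rw [h])
      have := RepG_adj.1 (hC'cl hm hm' hmm)
      rcases this.2 with h | h
      · exact absurd h hij
      · exact h
    have hCF : C ∈ F := by rw [hFeq]; exact hCcl
    have hsub2 : C' ⊆ C.biUnion (fun i => (Finset.range (y i)).image (Nat.pair i)) := by
      intro m hm
      obtain ⟨i, hi, a, ha, rfl⟩ := (hmemK' m).1 (hC' hm)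
      refine Finset.mem_biUnion.2 ⟨i, ?_, ?_⟩
      · have : φ (Nat.pair i a) ∈ C := Finset.mem_image_of_mem φ hm
        simpa [hφ, Nat.unpair_pair] using this
      · exact Finset.mem_image.2 ⟨a, Finset.mem_range.2 ha, rfl⟩
    calc C'.card ≤ (C.biUnion (fun i => (Finset.range (y i)).image (Nat.pair i))).card :=
          Finset.card_le_card hsub2
      _ ≤ ∑ i ∈ C, ((Finset.range (y i)).image (Nat.pair i)).card :=
          Finset.card_biUnion_le
      _ ≤ ∑ i ∈ C, y i := by
          refine Finset.sum_le_sum fun i _ => ?_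
          calc ((Finset.range (y i)).image (Nat.pair i)).card
              ≤ (Finset.range (y i)).card := Finset.card_image_le
            _ = y i := Finset.card_range _
      _ = ∑ i ∈ C ∩ E, y i := by
          rw [Finset.inter_eq_left.2 hCE]
      _ ≤ q := hclq C hCF
  have hchromK' : chrom (RepG G) K' ≤ q := by
    rw [rep_perfect hperf K']
    exact hcliqK'
  obtain ⟨f, hf1, hf2⟩ := col_mono (col_chrom (RepG G) K') hchromK'
  set S : ℕ → Finset ℕ := fun j => E.filter (fun i => ∃ a, a < y i ∧ f (Nat.pair i a) = j)
    with hSdef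
  set z : ℕ → (ℕ → ℝ) := fun j i => if i ∈ S j then ε i else 0 with hzdef
  have hSE : ∀ j, S j ⊆ E := fun j => Finset.filter_subset _ _
  have hsuppz : ∀ j, Function.support (z j) = ↑(S j) := by
    intro j
    ext i
    simp only [Function.mem_support, hzdef, Finset.mem_coe]
    constructor
    · intro h
      by_contra hi
      simp [hi] at h
    · intro hi
      rw [if_pos hi]
      rcases hε i (hSE j hi) with h | h <;> rw [h] <;> norm_num
  have hSperp : ∀ j, S j ∈ perp F := by
    intro j S' hS'
    rw [Finset.card_le_one]
    rintro a ha b hb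
    by_contra hab
    rw [Finset.mem_inter] at ha hb
    have hacl := Finset.mem_filter.1 ha.1
    have hbcl := Finset.mem_filter.1 hb.1
    obtain ⟨α, hα, hfα⟩ := hacl.2
    obtain ⟨β, hβ, hfβ⟩ := hbcl.2
    have hadj : G.Adj a b := by
      have : G.IsClique (S' : Set ℕ) := by rw [hFeq] at hS'; exact hS'
      exact this ha.2 hb.2 hab
    have hmema : Nat.pair a α ∈ K' := (hmemK' _).2 ⟨a, hacl.1, α, hα, rfl⟩
    have hmemb : Nat.pair b β ∈ K' := (hmemK' _).2 ⟨b, hbcl.1, β, hβ, rfl⟩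
    have hne : Nat.pair a α ≠ Nat.pair b β := fun h => hab (Nat.pair_eq_pair.1 h).1
    have hadj2 : (RepG G).Adj (Nat.pair a α) (Nat.pair b β) := by
      rw [RepG_adj, Nat.unpair_pair, Nat.unpair_pair]
      exact ⟨hne, Or.inr hadj⟩
    exact hf2 _ hmema _ hmemb hadj2 (by rw [hfα, hfβ])
  have hzW : ∀ j, z j ∈ {σ | σ ∈ W (perp F) ∧ Function.support σ ⊆ ↑E} := by
    intro j
    refine ⟨⟨?_, S j, hSperp j, hsuppz j⟩, ?_⟩
    · intro i
      by_cases hi : i ∈ S j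
      · rcases hε i (hSE j hi) with h | h
        · right; right; simp [hzdef, hi, h]
        · left; simp [hzdef, hi, h]
      · right; left; simp [hzdef, hi]
    · rw [hsuppz j]
      exact_mod_cast hSE j
  have hcount : ∀ i ∈ E, ((Finset.range q).filter (fun j => i ∈ S j)).card = y i := by
    intro i hi
    have himg : (Finset.range q).filter (fun j => i ∈ S j)
        = (Finset.range (y i)).image (fun a => f (Nat.pair i a)) := by
      ext j
      simp only [Finset.mem_filter, Finset.mem_range, Finset.mem_image]
      constructor
      · rintro ⟨hjq, hij⟩
        obtain ⟨a, ha, hfa⟩ := (Finset.mem_filter.1 hij).2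
        exact ⟨a, ha, hfa⟩
      · rintro ⟨a, ha, rfl⟩
        have hmem : Nat.pair i a ∈ K' := (hmemK' _).2 ⟨i, hi, a, ha, rfl⟩
        exact ⟨hf1 _ hmem, Finset.mem_filter.2 ⟨hi, a, ha, rfl⟩⟩
    rw [himg]
    rw [Finset.card_image_of_injOn, Finset.card_range]
    intro a ha b hb hfab
    simp only [Finset.coe_range, Set.mem_Iio] at ha hb
    by_contra hab
    have hne : Nat.pair i a ≠ Nat.pair i b := fun h => hab (Nat.pair_eq_pair.1 h).2
    have hadj2 : (RepG G).Adj (Nat.pair i a) (Nat.pair i b) := by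
      rw [RepG_adj, Nat.unpair_pair, Nat.unpair_pair]
      exact ⟨hne, Or.inl rfl⟩
    have hmema : Nat.pair i a ∈ K' := (hmemK' _).2 ⟨i, hi, a, ha, rfl⟩
    have hmemb : Nat.pair i b ∈ K' := (hmemK' _).2 ⟨i, hi, b, hb, rfl⟩
    exact hf2 _ hmema _ hmemb hadj2 hfab
  -- assemble the convex combination
  refine mem_convexHull_of_exists_fintype (ι := Fin q) (fun _ => 1/(q:ℝ))
    (fun j => z j) (fun _ => by positivity) ?_ (fun j => hzW j) ?_
  · rw [Finset.sum_const, Finset.card_univ, Fintype.card_fin, nsmul_eq_mul]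
    field_simp
  · funext i
    have hsum : (∑ j : Fin q, (1/(q:ℝ)) • z j) i = ∑ j : Fin q, (1/(q:ℝ)) * z j i := by
      rw [Finset.sum_apply]
      exact Finset.sum_congr rfl fun j _ => rfl
    rw [hsum]
    by_cases hi : i ∈ E
    · have hval : ∀ j : Fin q, (1/(q:ℝ)) * z j i
          = (ε i/(q:ℝ)) * (if i ∈ S (j:ℕ) then 1 else 0) := by
        intro j
        simp only [hzdef]
        split <;> ring
      rw [Finset.sum_congr rfl fun j _ => hval j, ← Finset.mul_sum]
      have hred : ∑ j : Fin q, (if i ∈ S (j:ℕ) then (1:ℝ) else 0) = ((y i : ℕ) : ℝ) := by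
        rw [← Finset.sum_range (fun j => if i ∈ S j then (1:ℝ) else 0)]
        rw [Finset.sum_ite, Finset.sum_const_zero, Finset.sum_const, add_zero, nsmul_eq_mul,
          mul_one, hcount i hi]
      rw [hred]
      ring
    · have hz0 : ∀ j : Fin q, (1/(q:ℝ)) * z j i = 0 := by
        intro j
        have : i ∉ S (j:ℕ) := fun h => hi (hSE _ h)
        simp [hzdef, this]
      rw [Finset.sum_congr rfl fun j _ => hz0 j, Finset.sum_const_zero, hy0 i hi]
      simp

lemma WE_finite (F : Set (Finset ℕ)) (E : Finset ℕ) :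
    {σ : ℕ → ℝ | σ ∈ W (perp F) ∧ Function.support σ ⊆ ↑E}.Finite := by
  classical
  have hsub : {σ : ℕ → ℝ | σ ∈ W (perp F) ∧ Function.support σ ⊆ ↑E} ⊆
      (fun P : Finset ℕ × Finset ℕ => fun i =>
        if i ∈ P.1 then (1:ℝ) else if i ∈ P.2 then -1 else 0) ''
      ↑(E.powerset ×ˢ E.powerset) := by
    rintro σ ⟨⟨hval, S, hS, hsupp⟩, hsub⟩
    refine ⟨(E.filter (fun i => σ i = 1), E.filter (fun i => σ i = -1)), ?_, ?_⟩
    · simp only [Finset.coe_product, Set.mem_prod, Finset.mem_coe, Finset.mem_powerset]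
      exact ⟨Finset.filter_subset _ _, Finset.filter_subset _ _⟩
    · funext i
      rcases hval i with h | h | h
      · -- σ i = -1
        have hiE : i ∈ E := hsub (by simp [Function.mem_support, h])
        have h1 : i ∉ Finset.filter (fun j => σ j = 1) E := by
          simp only [Finset.mem_filter, not_and]
          intro _
          rw [h]; norm_num
        have h2 : i ∈ Finset.filter (fun j => σ j = -1) E :=
          Finset.mem_filter.2 ⟨hiE, h⟩
        simp only [if_neg h1, if_pos h2, h]
      · -- σ i = 0
        simp [Finset.mem_filter, h]
      · -- σ i = 1
        have hiE : i ∈ E := hsub (by simp [Function.mem_support, h])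
        simp [Finset.mem_filter, hiE, h]
  exact Set.Finite.subset (Set.Finite.image _ (E.powerset ×ˢ E.powerset).finite_toSet) hsub

lemma Ball_subset_hull {F : Set (Finset ℕ)} {G : SimpleGraph ℕ}
    (hFeq : F = cliques G) (hperf : ∀ H : Finset ℕ, chrom G H = cliq G H) :
    Ball F ⊆ convexHull ℝ (W (perp F)) := by
  classical
  intro x hx
  rw [mem_Ball_iff] at hx
  obtain ⟨hfin, hnorm⟩ := hx
  by_cases hx0 : x = 0
  · subst hx0
    refine subset_convexHull ℝ _ ?_
    refine ⟨fun n => Or.inr (Or.inl rfl), ∅, ?_, by simp⟩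
    intro S hS
    simp
  set E := hfin.toFinset with hE
  have hmemE : ∀ i, i ∈ E ↔ x i ≠ 0 := by
    intro i
    rw [hE, Set.Finite.mem_toFinset]
    exact Iff.rfl
  have hEne : E.Nonempty := by
    by_contra h
    rw [Finset.not_nonempty_iff_eq_empty] at h
    refine hx0 (funext fun i => ?_)
    by_contra hne
    have : i ∈ E := (hmemE i).2 hne
    simp [h] at this
  set ε : ℕ → ℝ := fun i => if x i < 0 then -1 else 1 with hεdef
  have hε : ∀ i ∈ E, ε i = 1 ∨ ε i = -1 := by
    intro i _
    by_cases h : x i < 0 <;> simp [hεdef, h]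
  have hsign : ∀ i, x i = ε i * |x i| := by
    intro i
    by_cases h : x i < 0
    · rw [hεdef]; simp only [if_pos h]; rw [abs_of_neg h]; ring
    · rw [hεdef]; simp only [if_neg h]; rw [abs_of_nonneg (not_lt.1 h)]; ring
  set WE := {σ : ℕ → ℝ | σ ∈ W (perp F) ∧ Function.support σ ⊆ ↑E} with hWE
  have hclosed : IsClosed (convexHull ℝ WE) := ((WE_finite F E).isCompact_convexHull ℝ).isClosed
  set c : ℕ := 2 * E.card with hc
  have hcpos : 0 < c := by
    rw [hc]
    have := Finset.card_pos.2 hEne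
    omega
  set θ : ℕ → ℝ := fun n => 1/((n:ℝ)+1) with hθ
  have hθpos : ∀ n, 0 < θ n := fun n => by positivity
  have hθle : ∀ n, θ n ≤ 1 := by
    intro n
    rw [hθ]
    rw [div_le_one (by positivity)]
    have : (0:ℝ) ≤ (n:ℝ) := Nat.cast_nonneg n
    linarith
  set q : ℕ → ℕ := fun n => c * (n+1) with hqdef
  have hqpos : ∀ n, 0 < q n := fun n => Nat.mul_pos hcpos (Nat.succ_pos n)
  set y : ℕ → ℕ → ℕ := fun n i => if i ∈ E then ⌈(1 - θ n) * |x i| * (q n : ℝ)⌉₊ else 0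
    with hydef
  have harg : ∀ n i, 0 ≤ (1 - θ n) * |x i| * (q n : ℝ) := by
    intro n i
    have h1 : (0:ℝ) ≤ 1 - θ n := by linarith [hθle n]
    exact mul_nonneg (mul_nonneg h1 (abs_nonneg _)) (Nat.cast_nonneg _)
  have hyle : ∀ n, ∀ i, (1 - θ n) * |x i| * (q n : ℝ) ≤ (y n i : ℝ) ∨ i ∉ E := by
    intro n i
    by_cases hi : i ∈ E
    · left
      rw [hydef]
      simp only [if_pos hi]
      exact Nat.le_ceil _
    · right; exact hi
  have hylt : ∀ n, ∀ i ∈ E, (y n i : ℝ) < (1 - θ n) * |x i| * (q n : ℝ) + 1 := by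
    intro n i hi
    rw [hydef]
    simp only [if_pos hi]
    exact Nat.ceil_lt_add_one (harg n i)
  have hqθ : ∀ n, θ n * (q n : ℝ) = (c : ℝ) := by
    intro n
    rw [hθ, hqdef]
    push_cast
    field_simp
  have hclq : ∀ n, ∀ C ∈ F, ∑ i ∈ C ∩ E, y n i ≤ q n := by
    intro n C hC
    have hreal : ((∑ i ∈ C ∩ E, y n i : ℕ) : ℝ) < (q n : ℝ) := by
      rcases (C ∩ E).eq_empty_or_nonempty with hemp | hne2
      · rw [hemp]
        simpa using (by exact_mod_cast hqpos n : (0:ℝ) < (q n : ℝ))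
      push_cast
      have h1 : ∑ i ∈ C ∩ E, (y n i : ℝ)
          < ∑ i ∈ C ∩ E, ((1 - θ n) * |x i| * (q n : ℝ) + 1) := by
        refine Finset.sum_lt_sum_of_nonempty hne2 fun i hi => ?_
        exact hylt n i (Finset.mem_inter.1 hi).2
      refine h1.trans_le ?_
      rw [Finset.sum_add_distrib, Finset.sum_const, nsmul_eq_mul, mul_one]
      have h2 : ∑ i ∈ C ∩ E, (1 - θ n) * |x i| * (q n : ℝ)
          = (1 - θ n) * (q n : ℝ) * ∑ i ∈ C ∩ E, |x i| := by
        rw [Finset.mul_sum]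
        exact Finset.sum_congr rfl fun i _ => by ring
      rw [h2]
      have h3 : ∑ i ∈ C ∩ E, |x i| ≤ 1 := by
        refine le_trans ?_ (hnorm C hC)
        exact Finset.sum_le_sum_of_subset_of_nonneg Finset.inter_subset_left
          (fun i _ _ => abs_nonneg _)
      have h4 : ((C ∩ E).card : ℝ) ≤ (c : ℝ)/2 := by
        have : (C ∩ E).card ≤ E.card := Finset.card_le_card Finset.inter_subset_right
        have h5 : ((C ∩ E).card : ℝ) ≤ (E.card : ℝ) := by exact_mod_cast this
        rw [hc]
        push_cast
        linarith
      have h6 : (1 - θ n) * (q n : ℝ) * ∑ i ∈ C ∩ E, |x i| ≤ (1 - θ n) * (q n : ℝ) := by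
        have hfac : (0:ℝ) ≤ (1 - θ n) * (q n : ℝ) := by
          have := hθle n
          have : (0:ℝ) ≤ 1 - θ n := by linarith
          exact mul_nonneg this (Nat.cast_nonneg _)
        nlinarith
      have h7 : (1 - θ n) * (q n : ℝ) = (q n : ℝ) - (c:ℝ) := by
        have := hqθ n
        ring_nf
        ring_nf at this
        linarith [this]
      have h8 : (1:ℝ) ≤ (c:ℝ)/2 := by
        have : 1 ≤ E.card := Finset.card_pos.2 hEne
        rw [hc]
        push_cast
        have : (1:ℝ) ≤ (E.card : ℝ) := by exact_mod_cast this
        linarith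
      linarith
    have := hreal
    exact_mod_cast le_of_lt this
  have hmem : ∀ n, (fun i => ε i * ((y n i : ℝ)/(q n : ℝ))) ∈ convexHull ℝ WE := by
    intro n
    refine rat_mem_hull hFeq hperf E ε hε (y n) ?_ (q n) (hqpos n) (hclq n)
    intro i hi
    rw [hydef]
    simp [hi]
  have hconv : Filter.Tendsto (fun n => (fun i => ε i * ((y n i : ℝ)/(q n : ℝ))))
      Filter.atTop (nhds x) := by
    rw [tendsto_pi_nhds]
    intro i
    by_cases hi : i ∈ E
    · have hbound : ∀ n, |ε i * ((y n i : ℝ)/(q n : ℝ)) - x i| ≤ θ n * (|x i| + 1) := by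
        intro n
        have hεabs : |ε i| = 1 := by
          rcases hε i hi with h | h <;> rw [h] <;> norm_num
        have hxi := hsign i
        have heq : ε i * ((y n i : ℝ)/(q n : ℝ)) - x i
            = ε i * ((y n i : ℝ)/(q n : ℝ) - |x i|) := by
          linear_combination -1 * hxi
        rw [heq, abs_mul, hεabs, one_mul]
        have hql : (1:ℝ) ≤ (q n : ℝ) := by exact_mod_cast hqpos n
        have hq1 : (1:ℝ)/(q n : ℝ) ≤ θ n := by
          rw [hθ, hqdef]
          rw [div_le_div_iff₀ (by exact_mod_cast hqpos n) (by positivity)]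
          push_cast
          have h1 : (1:ℝ) ≤ (c:ℝ) := by exact_mod_cast hcpos
          nlinarith [Nat.cast_nonneg (α := ℝ) n]
        have hup : (y n i : ℝ)/(q n : ℝ) - |x i| ≤ θ n * (|x i| + 1) := by
          have := hylt n i hi
          have hdiv : (y n i : ℝ)/(q n : ℝ)
              < (1 - θ n) * |x i| + 1/(q n : ℝ) := by
            rw [div_lt_iff₀ (by exact_mod_cast hqpos n)]
            calc (y n i : ℝ) < (1 - θ n) * |x i| * (q n : ℝ) + 1 := this
              _ = ((1 - θ n) * |x i| + 1/(q n : ℝ)) * (q n : ℝ) := by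
                  field_simp
          have := hθpos n
          nlinarith [abs_nonneg (x i)]
        have hlo : -(θ n * (|x i| + 1)) ≤ (y n i : ℝ)/(q n : ℝ) - |x i| := by
          rcases hyle n i with h | h
          · have hdiv : (1 - θ n) * |x i| ≤ (y n i : ℝ)/(q n : ℝ) := by
              rw [le_div_iff₀ (by exact_mod_cast hqpos n)]
              linarith [h]
            have := hθpos n
            nlinarith [abs_nonneg (x i)]
          · exact absurd hi h
        rw [abs_le]
        exact ⟨hlo, hup⟩
      have hθ0 : Filter.Tendsto (fun n => θ n * (|x i| + 1)) Filter.atTop (nhds 0) := by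
        have h1 : Filter.Tendsto θ Filter.atTop (nhds 0) := by
          rw [hθ]
          exact tendsto_one_div_add_atTop_nhds_zero_nat
        have := h1.mul_const (|x i| + 1)
        simpa [hθ, one_div] using this
      have h0 : Filter.Tendsto (fun n => ε i * ((y n i : ℝ)/(q n : ℝ)) - x i)
          Filter.atTop (nhds 0) := by
        refine squeeze_zero_norm ?_ hθ0
        intro n
        rw [Real.norm_eq_abs]
        exact hbound n
      have := h0.add_const (x i)
      simpa using this
    · have hxi : x i = 0 := by
        by_contra h
        exact hi ((hmemE i).2 h)
      have : ∀ n, ε i * ((y n i : ℝ)/(q n : ℝ)) = 0 := by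
        intro n
        rw [hydef]
        simp [hi]
      rw [hxi]
      simp only [this]
      exact tendsto_const_nhds
  have hxWE : x ∈ convexHull ℝ WE :=
    hclosed.mem_of_tendsto hconv (Filter.Eventually.of_forall hmem)
  refine convexHull_mono ?_ hxWE
  intro σ hσ
  exact hσ.1

theorem stmt_5 (F : Set (Finset ℕ)) (hF : FHC F) :
    {x : ℕ → ℝ | (Function.support x).Finite ∧ combNorm F x ≤ 1} =
      convexHull ℝ (W (perp F)) ↔
    ∃ G : SimpleGraph ℕ, IsPerfect G ∧ F = cliques G := by
  constructor
  · intro hEq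
    have hsub : Ball F ⊆ convexHull ℝ (W (perp F)) := hEq.le
    have hFeq := F_eq_cliques hF hsub
    refine ⟨Gr F, ?_, hFeq⟩
    exact (perfect_iff (Gr F)).2 (forward_perfect hF hsub hFeq)
  · rintro ⟨G, hGperf, hFeq⟩
    have hperf := (perfect_iff G).1 hGperf
    apply Set.Subset.antisymm
    · exact Ball_subset_hull hFeq hperf
    · exact hull_subset_Ball F
end

section
/- Let G be a perfect simple graph on ℕ and 𝓕 = 𝓒(G) the family of finite cliques of G. Then the set of extreme points of the convex set { y : ℕ → ℝ : ‖y‖_𝓕 ≤ 1 } ⊆ ℝ^ℕ equals { σ ∈ {−1,0,1}^ℕ : supp(σ) is a ⊆-maximal independent set of G (finite or infinite) }. -/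
open scoped ENNReal

/-- An independent (anti-clique) set of vertices. -/
def IsIndep (G : SimpleGraph ℕ) (s : Set ℕ) : Prop :=
  ∀ a ∈ s, ∀ b ∈ s, ¬ G.Adj a b

namespace Stmt7

variable {G : SimpleGraph ℕ}

/-- The unit ball. -/
def K (G : SimpleGraph ℕ) : Set (ℕ → ℝ) := {y | combNorm (cliques G) y ≤ 1}

lemma mem_K_iff {y : ℕ → ℝ} : y ∈ K G ↔ ∀ C ∈ cliques G, ∑ i ∈ C, |y i| ≤ 1 := by
  unfold K combNorm
  rw [Set.mem_setOf_eq, iSup₂_le_iff]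
  refine forall₂_congr fun C hC => ?_
  exact ENNReal.ofReal_le_one

lemma singleton_mem_cliques (n : ℕ) : ({n} : Finset ℕ) ∈ cliques G := by
  simp [cliques, SimpleGraph.isClique_singleton]

lemma pair_mem_cliques {n m : ℕ} (h : G.Adj n m) : ({n, m} : Finset ℕ) ∈ cliques G := by
  have : (({n, m} : Finset ℕ) : Set ℕ) = {n, m} := by simp
  simp only [cliques, Set.mem_setOf_eq, this]
  exact SimpleGraph.isClique_pair.2 fun _ => h

lemma abs_le_one_of_mem_K {y : ℕ → ℝ} (hy : y ∈ K G) (n : ℕ) : |y n| ≤ 1 := by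
  have := mem_K_iff.1 hy {n} (singleton_mem_cliques n)
  simpa using this

/-- sign vectors with independent support -/
def Sgn (G : SimpleGraph ℕ) : Set (ℕ → ℝ) :=
  {σ | (∀ n, σ n = -1 ∨ σ n = 0 ∨ σ n = 1) ∧ IsIndep G (Function.support σ)}

lemma sgn_abs {σ : ℕ → ℝ} (hσ : ∀ n, σ n = -1 ∨ σ n = 0 ∨ σ n = 1) (n : ℕ) :
    |σ n| = if σ n = 0 then 0 else 1 := by
  rcases hσ n with h | h | h <;> simp [h]

lemma Sgn_subset_K : Sgn G ⊆ K G := by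
  rintro σ ⟨hval, hind⟩
  rw [mem_K_iff]
  intro C hC
  classical
  have hsum : ∑ i ∈ C, |σ i| = (C.filter (fun i => σ i ≠ 0)).card := by
    rw [Finset.card_filter]
    push_cast
    refine Finset.sum_congr rfl fun i _ => ?_
    rw [sgn_abs hval]
    by_cases h : σ i = 0 <;> simp [h]
  rw [hsum]
  have hcard : (C.filter (fun i => σ i ≠ 0)).card ≤ 1 := by
    rw [Finset.card_le_one]
    intro a ha b hb
    simp only [Finset.mem_filter] at ha hb
    by_contra hne
    exact hind a ha.2 b hb.2 (hC ha.1 hb.1 hne)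
  exact_mod_cast hcard

/-- The right-hand side set. -/
def RHS (G : SimpleGraph ℕ) : Set (ℕ → ℝ) :=
  {σ | (∀ n, σ n = -1 ∨ σ n = 0 ∨ σ n = 1) ∧
      IsIndep G (Function.support σ) ∧
      ∀ t : Set ℕ, IsIndep G t → Function.support σ ⊆ t → t = Function.support σ}

lemma rhs_subset_extreme : RHS G ⊆ Set.extremePoints ℝ (K G) := by
  rintro σ ⟨hval, hind, hmax⟩
  have hσK : σ ∈ K G := Sgn_subset_K ⟨hval, hind⟩
  refine ⟨hσK, ?_⟩
  rintro x₁ hx₁ x₂ hx₂ hseg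
  obtain ⟨a, b, ha, hb, hab, habσ⟩ := hseg
  -- first: agreement on the support
  have key : ∀ m, σ m ≠ 0 → x₁ m = σ m ∧ x₂ m = σ m := by
    intro m hm
    have h1 : |x₁ m| ≤ 1 := abs_le_one_of_mem_K hx₁ m
    have h2 : |x₂ m| ≤ 1 := abs_le_one_of_mem_K hx₂ m
    have hcomb : a * x₁ m + b * x₂ m = σ m := by
      have := congrFun habσ m; simpa using this
    rcases hval m with h | h | h
    · -- σ m = -1
      have e1 : a * (x₁ m + 1) + b * (x₂ m + 1) = 0 := by
        rw [h] at hcomb; nlinarith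
      have p1 : 0 ≤ a * (x₁ m + 1) := mul_nonneg ha.le (by nlinarith [abs_le.1 h1])
      have p2 : 0 ≤ b * (x₂ m + 1) := mul_nonneg hb.le (by nlinarith [abs_le.1 h2])
      constructor
      · have : a * (x₁ m + 1) = 0 := by linarith
        have := (mul_eq_zero.1 this).resolve_left (ne_of_gt ha)
        rw [h]; linarith
      · have : b * (x₂ m + 1) = 0 := by linarith
        have := (mul_eq_zero.1 this).resolve_left (ne_of_gt hb)
        rw [h]; linarith
    · exact absurd h hm
    · have e1 : a * (1 - x₁ m) + b * (1 - x₂ m) = 0 := by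
        rw [h] at hcomb; nlinarith
      have p1 : 0 ≤ a * (1 - x₁ m) := mul_nonneg ha.le (by nlinarith [abs_le.1 h1])
      have p2 : 0 ≤ b * (1 - x₂ m) := mul_nonneg hb.le (by nlinarith [abs_le.1 h2])
      constructor
      · have : a * (1 - x₁ m) = 0 := by linarith
        have := (mul_eq_zero.1 this).resolve_left (ne_of_gt ha)
        rw [h]; linarith
      · have : b * (1 - x₂ m) = 0 := by linarith
        have := (mul_eq_zero.1 this).resolve_left (ne_of_gt hb)
        rw [h]; linarith
  -- zeros
  have key0 : ∀ n, σ n = 0 → x₁ n = 0 ∧ x₂ n = 0 := by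
    intro n hn
    -- support ∪ {n} is not independent
    have hnot : ¬ IsIndep G (Function.support σ ∪ {n}) := by
      intro hI
      have := hmax _ hI (Set.subset_union_left)
      have hnmem : n ∈ Function.support σ := by
        rw [← this]; exact Set.mem_union_right _ rfl
      exact hnmem hn
    -- get an adjacent m in the support
    obtain ⟨u, hu, v, hv, huv⟩ : ∃ u ∈ Function.support σ ∪ {n}, ∃ v ∈ Function.support σ ∪ {n}, G.Adj u v := by
      by_contra hc
      push_neg at hc
      exact hnot fun u hu v hv => hc u hu v hv
    have hm : ∃ m, m ∈ Function.support σ ∧ G.Adj n m := by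
      rcases hu with hu | hu
      · rcases hv with hv | hv
        · exact absurd huv (hind u hu v hv)
        · simp only [Set.mem_singleton_iff] at hv
          rw [hv] at huv
          exact ⟨u, hu, huv.symm⟩
      · simp only [Set.mem_singleton_iff] at hu
        rw [hu] at huv
        rcases hv with hv | hv
        · exact ⟨v, hv, huv⟩
        · simp only [Set.mem_singleton_iff] at hv
          rw [hv] at huv
          exact absurd huv (G.loopless.irrefl n)
    obtain ⟨m, hmsupp, hadj⟩ := hm
    have hnm : n ≠ m := fun h => (h ▸ hmsupp) hn
    have hx1m : |x₁ m| = 1 := by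
      rw [(key m hmsupp).1, sgn_abs hval, if_neg hmsupp]
    have hx2m : |x₂ m| = 1 := by
      rw [(key m hmsupp).2, sgn_abs hval, if_neg hmsupp]
    have hp := pair_mem_cliques hadj
    have hs1 := mem_K_iff.1 hx₁ _ hp
    have hs2 := mem_K_iff.1 hx₂ _ hp
    rw [Finset.sum_pair hnm] at hs1 hs2
    constructor
    · have : |x₁ n| ≤ 0 := by linarith
      simpa [abs_nonpos_iff] using this
    · have : |x₂ n| ≤ 0 := by linarith
      simpa [abs_nonpos_iff] using this
  funext n
  by_cases hn : σ n = 0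
  · rw [hn]; exact (key0 n hn).1
  · exact (key n hn).1


section Generic
set_option linter.unusedSectionVars false

variable {E : Type*} [AddCommGroup E] [Module ℝ E] [TopologicalSpace E]
  [IsTopologicalAddGroup E] [ContinuousSMul ℝ E] [T2Space E]

/-- convex join of two compact sets is compact -/
lemma isCompact_convexJoin {A B : Set E} (hA : IsCompact A) (hB : IsCompact B) :
    IsCompact (convexJoin ℝ A B) := by
  have : convexJoin ℝ A B =
      (fun p : ℝ × E × E => (1 - p.1) • p.2.1 + p.1 • p.2.2) ''
        ((Set.Icc (0:ℝ) 1) ×ˢ A ×ˢ B) := by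
    ext x
    simp only [mem_convexJoin, Set.mem_image, Set.mem_prod]
    constructor
    · rintro ⟨a, ha, b, hb, hx⟩
      rw [segment_eq_image] at hx
      obtain ⟨θ, hθ, hxe⟩ := hx
      exact ⟨(θ, a, b), ⟨hθ, ha, hb⟩, hxe⟩
    · rintro ⟨⟨θ, a, b⟩, ⟨hθ, ha, hb⟩, hxe⟩
      refine ⟨a, ha, b, hb, ?_⟩
      rw [segment_eq_image]
      exact ⟨θ, hθ, hxe⟩
  rw [this]
  apply IsCompact.image ((isCompact_Icc).prod (hA.prod hB))
  fun_prop

/-- extreme point lying in a convex join of subsets of K is in one of them -/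
lemma extreme_mem_of_mem_convexJoin {K A B : Set E} {x : E}
    (hx : x ∈ Set.extremePoints ℝ K) (hA : A ⊆ K) (hB : B ⊆ K)
    (hmem : x ∈ convexJoin ℝ A B) : x ∈ A ∨ x ∈ B := by
  rw [mem_convexJoin] at hmem
  obtain ⟨a, ha, b, hb, hseg⟩ := hmem
  by_cases hxa : x = a
  · exact Or.inl (hxa ▸ ha)
  by_cases hxb : x = b
  · exact Or.inr (hxb ▸ hb)
  have hop : x ∈ openSegment ℝ a b :=
    mem_openSegment_of_ne_left_right (Ne.symm hxa) (Ne.symm hxb) hseg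
  have := hx.2 (hA ha) (hB hb) hop
  exact Or.inl (this ▸ ha)


lemma hull_union_list {x : E} {K : Set E} (hKconv : Convex ℝ K)
    (hx : x ∈ Set.extremePoints ℝ K) :
    ∀ l : List (Set E), l ≠ [] →
      (∀ A ∈ l, IsCompact A ∧ Convex ℝ A ∧ A.Nonempty ∧ A ⊆ K) →
      IsCompact (convexHull ℝ (l.foldr (· ∪ ·) ∅)) ∧
        (x ∈ convexHull ℝ (l.foldr (· ∪ ·) ∅) → ∃ A ∈ l, x ∈ A) := by
  intro l
  induction l with
  | nil => intro h; exact absurd rfl h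
  | cons A rest ih =>
    intro _ hmem
    obtain ⟨hAc, hAconv, hAne, hAK⟩ := hmem A (List.mem_cons_self)
    rcases rest with _ | ⟨B, rest'⟩
    · simp only [List.foldr, Set.union_empty]
      rw [hAconv.convexHull_eq]
      exact ⟨hAc, fun h => ⟨A, List.mem_cons_self, h⟩⟩
    · have hrest : (B :: rest') ≠ [] := by simp
      obtain ⟨ihc, ihmem⟩ := ih hrest (fun A' hA' => hmem A' (List.mem_cons_of_mem _ hA'))
      set U := (B :: rest').foldr (· ∪ ·) ∅ with hU
      have hUne : U.Nonempty := by
        obtain ⟨b, hb⟩ := (hmem B (by simp)).2.2.1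
        exact ⟨b, by simp only [hU, List.foldr]; exact Set.mem_union_left _ hb⟩
      have hUK : U ⊆ K := by
        intro y hy
        -- y in foldr union: find the member
        have : ∀ (l' : List (Set E)), (∀ A' ∈ l', A' ⊆ K) → y ∈ l'.foldr (· ∪ ·) ∅ → y ∈ K := by
          intro l'
          induction l' with
          | nil => intro _ h; exact absurd h (Set.notMem_empty y)
          | cons C cs ihc2 =>
            intro hsub hmem2
            rcases hmem2 with h | h
            · exact hsub C (by simp) h
            · exact ihc2 (fun A' hA' => hsub A' (List.mem_cons_of_mem _ hA')) h
        exact this _ (fun A' hA' => (hmem A' (List.mem_cons_of_mem _ hA')).2.2.2) hy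
      have key : convexHull ℝ ((A :: B :: rest').foldr (· ∪ ·) ∅) =
          convexJoin ℝ A (convexHull ℝ U) := by
        have h1 : (A :: B :: rest').foldr (· ∪ ·) ∅ = A ∪ U := rfl
        rw [h1, ← convexHull_convexHull_union_right,
          hAconv.convexHull_union (convex_convexHull ℝ U) hAne (hUne.mono (subset_convexHull ℝ U))]
      rw [key]
      constructor
      · exact isCompact_convexJoin hAc ihc
      · intro hxmem
        have hhullK : convexHull ℝ U ⊆ K := convexHull_min hUK hKconv
        rcases extreme_mem_of_mem_convexJoin hx hAK hhullK hxmem with h | h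
        · exact ⟨A, by simp, h⟩
        · obtain ⟨A', hA', hxA'⟩ := ihmem h
          exact ⟨A', List.mem_cons_of_mem _ hA', hxA'⟩

/-- Milman's theorem, specialized to countable products of ℝ. -/
lemma milman_pi {K S : Set (ℕ → ℝ)} (hKc : IsCompact K) (hKconv : Convex ℝ K)
    (hS : IsClosed S) (hSK : S ⊆ K) (hdense : K ⊆ closure (convexHull ℝ S))
    {x : ℕ → ℝ} (hx : x ∈ Set.extremePoints ℝ (K : Set (ℕ → ℝ))) : x ∈ S := by
  classical
  have hxK : x ∈ K := hx.1
  have hSne : S.Nonempty := by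
    rcases Set.eq_empty_or_nonempty S with h | h
    · exfalso
      have := hdense hxK
      rw [h] at this
      simp [convexHull_empty] at this
    · exact h
  rw [← hS.closure_eq]
  rw [mem_closure_iff]
  intro U hUopen hxU
  obtain ⟨I, u, hu, hpi⟩ := isOpen_pi_iff.1 hUopen x hxU
  -- find δ
  have hδ : ∃ δ : ℝ, 0 < δ ∧ ∀ i ∈ I, ∀ r : ℝ, |r - x i| < δ → r ∈ u i := by
    have : ∀ i ∈ I, ∃ ε : ℝ, 0 < ε ∧ ∀ r : ℝ, |r - x i| < ε → r ∈ u i := by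
      intro i hi
      obtain ⟨ε, hε, hball⟩ := Metric.isOpen_iff.1 (hu i hi).1 (x i) (hu i hi).2
      exact ⟨ε, hε, fun r hr => hball (by simpa [Real.dist_eq] using hr)⟩
    choose! εf hεf using this
    rcases I.eq_empty_or_nonempty with h | h
    · exact ⟨1, one_pos, by simp [h]⟩
    · refine ⟨I.inf' h εf, ?_, ?_⟩
      · exact (Finset.lt_inf'_iff h).2 fun i hi => (hεf i hi).1
      · intro i hi r hr
        exact (hεf i hi).2 r (lt_of_lt_of_le hr (Finset.inf'_le _ hi))
  obtain ⟨δ, hδpos, hδball⟩ := hδ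
  -- compact S, cover by cylinders
  have hScomp : IsCompact S := hKc.of_isClosed_subset hS hSK
  set O : (ℕ → ℝ) → Set (ℕ → ℝ) := fun s => Set.pi (I : Set ℕ) (fun i => Metric.ball (s i) (δ/2))
  have hOopen : ∀ s, IsOpen (O s) := fun s =>
    isOpen_set_pi (Finset.finite_toSet I) (fun i _ => Metric.isOpen_ball)
  have hcover : S ⊆ ⋃ s ∈ S, O s := by
    intro s hs
    exact Set.mem_biUnion hs (by simp [O, Set.mem_pi, hδpos, Metric.mem_ball, half_pos hδpos])
  obtain ⟨T, hTS, hTfin, hTcover⟩ :=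
    hScomp.elim_finite_subcover_image (fun s _ => hOopen s) hcover
  -- closed cylinders
  set C : (ℕ → ℝ) → Set (ℕ → ℝ) := fun s => {y | ∀ i ∈ I, |y i - s i| ≤ δ/2}
  have hCclosed : ∀ s, IsClosed (C s) := by
    intro s
    have : C s = ⋂ i ∈ I, {y : ℕ → ℝ | |y i - s i| ≤ δ/2} := by
      ext y; simp [C, Set.mem_iInter]
    rw [this]
    refine isClosed_biInter fun i _ => ?_
    have : Continuous fun y : ℕ → ℝ => |y i - s i| := by fun_prop
    exact isClosed_le this continuous_const
  have hCconv : ∀ s, Convex ℝ (C s) := by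
    intro s
    intro y hy z hz a b ha hb hab
    intro i hi
    have hy' := hy i hi
    have hz' := hz i hi
    have heq : (a • y + b • z) i - s i = a * (y i - s i) + b * (z i - s i) := by
      have h1 : a * (y i - s i) + b * (z i - s i) = a * y i + b * z i - (a + b) * s i := by ring
      rw [h1, hab, one_mul]
      simp [Pi.add_apply, Pi.smul_apply, smul_eq_mul]
    rw [heq]
    calc |a * (y i - s i) + b * (z i - s i)| ≤ |a * (y i - s i)| + |b * (z i - s i)| := abs_add_le _ _
      _ ≤ a * (δ/2) + b * (δ/2) := by
          rw [abs_mul, abs_mul, abs_of_nonneg ha, abs_of_nonneg hb]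
          exact add_le_add (by nlinarith [abs_nonneg (y i - s i)]) (by nlinarith [abs_nonneg (z i - s i)])
      _ = δ/2 := by nlinarith [hab]
  set V : (ℕ → ℝ) → Set (ℕ → ℝ) := fun s => closure (convexHull ℝ (S ∩ C s))
  have hVK : ∀ s, V s ⊆ K := fun s =>
    closure_minimal (convexHull_min (Set.inter_subset_left.trans hSK) hKconv) hKc.isClosed
  have hVC : ∀ s, V s ⊆ C s := fun s =>
    closure_minimal (convexHull_min Set.inter_subset_right (hCconv s)) (hCclosed s)
  have hVcompact : ∀ s, IsCompact (V s) := fun s =>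
    hKc.of_isClosed_subset isClosed_closure (hVK s)
  have hVconv : ∀ s, Convex ℝ (V s) := fun s => (convex_convexHull ℝ _).closure
  have hVne : ∀ s ∈ T, (V s).Nonempty := by
    intro s hs
    refine ⟨s, subset_closure (subset_convexHull ℝ _ ⟨hTS hs, ?_⟩)⟩
    intro i _; simp [abs_nonneg, le_of_lt (half_pos hδpos), sub_self]
  -- T nonempty
  have hTne : T.Nonempty := by
    obtain ⟨s₀, hs₀⟩ := hSne
    have := hTcover hs₀
    rw [Set.mem_iUnion₂] at this
    obtain ⟨i, hi, _⟩ := this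
    exact ⟨i, hi⟩
  -- the list
  set l : List (Set (ℕ → ℝ)) := hTfin.toFinset.toList.map V with hl
  have hlne : l ≠ [] := by
    simp only [hl, ne_eq, List.map_eq_nil_iff, Finset.toList_eq_nil, Set.Finite.toFinset_eq_empty]
    exact Set.nonempty_iff_ne_empty.1 hTne
  have hlmem : ∀ A ∈ l, IsCompact A ∧ Convex ℝ A ∧ A.Nonempty ∧ A ⊆ K := by
    intro A hA
    rw [hl, List.mem_map] at hA
    obtain ⟨s, hs, rfl⟩ := hA
    rw [Finset.mem_toList, Set.Finite.mem_toFinset] at hs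
    exact ⟨hVcompact s, hVconv s, hVne s hs, hVK s⟩
  obtain ⟨hcomp, hext⟩ := hull_union_list hKconv hx l hlne hlmem
  -- S ⊆ foldr union
  have hSsub : S ⊆ l.foldr (· ∪ ·) ∅ := by
    intro s' hs'
    have := hTcover hs'
    rw [Set.mem_iUnion₂] at this
    obtain ⟨s, hsT, hmem⟩ := this
    have hsV : s' ∈ V s := by
      refine subset_closure (subset_convexHull ℝ _ ⟨hs', ?_⟩)
      intro i hi
      have := hmem i hi
      rw [Metric.mem_ball, Real.dist_eq] at this
      exact le_of_lt this
    have hVmem : V s ∈ l := by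
      rw [hl, List.mem_map]
      exact ⟨s, by rw [Finset.mem_toList, Set.Finite.mem_toFinset]; exact hsT, rfl⟩
    -- membership in foldr union
    clear_value l
    clear hl hlne hlmem hext hcomp
    induction l with
    | nil => exact absurd hVmem List.not_mem_nil
    | cons A rest ih =>
      rcases List.mem_cons.1 hVmem with h | h
      · exact Set.mem_union_left _ (h ▸ hsV)
      · exact Set.mem_union_right _ (ih h)
  -- x is in the hull
  have hxmem : x ∈ convexHull ℝ (l.foldr (· ∪ ·) ∅) := by
    have h1 : closure (convexHull ℝ S) ⊆ convexHull ℝ (l.foldr (· ∪ ·) ∅) := by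
      apply closure_minimal
      · exact convexHull_mono hSsub
      · exact hcomp.isClosed
    exact h1 (hdense hxK)
  obtain ⟨A, hAl, hxA⟩ := hext hxmem
  rw [hl, List.mem_map] at hAl
  obtain ⟨s, hsl, rfl⟩ := hAl
  rw [Finset.mem_toList, Set.Finite.mem_toFinset] at hsl
  -- x ∈ C s, so s is close to x, so s ∈ U
  have hxC := hVC s hxA
  refine ⟨s, ?_, hTS hsl⟩
  apply hpi
  intro i hi
  have := hxC i hi
  apply hδball i hi
  have : |s i - x i| ≤ δ/2 := by rw [abs_sub_comm]; exact this
  linarith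

end Generic

section Comb

attribute [local instance 10] Classical.propDecidable

variable (G)

/-- The maximum `w`-weight of a clique inside `A`. -/
noncomputable def nu (A : Finset ℕ) (w : ℕ → ℕ) : ℕ :=
  (A.powerset.filter (fun D : Finset ℕ => G.IsClique (D : Set ℕ))).sup (fun D => ∑ i ∈ D, w i)

variable {G}

lemma sum_le_nu {A D : Finset ℕ} {w : ℕ → ℕ} (hD : D ⊆ A) (hcl : G.IsClique (D : Set ℕ)) :
    ∑ i ∈ D, w i ≤ nu G A w := by
  apply Finset.le_sup (f := fun D => ∑ i ∈ D, w i)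
  simp only [Finset.mem_filter, Finset.mem_powerset]
  exact ⟨hD, hcl⟩

lemma exists_eq_nu (A : Finset ℕ) (w : ℕ → ℕ) :
    ∃ D, D ⊆ A ∧ G.IsClique (D : Set ℕ) ∧ ∑ i ∈ D, w i = nu G A w := by
  have hne : (A.powerset.filter (fun D : Finset ℕ => G.IsClique (D : Set ℕ))).Nonempty := by
    refine ⟨∅, ?_⟩
    simp [Finset.empty_mem_powerset, SimpleGraph.isClique_empty]
  obtain ⟨D, hD, hval⟩ := Finset.exists_mem_eq_sup _ hne (fun D => ∑ i ∈ D, w i)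
  simp only [Finset.mem_filter, Finset.mem_powerset] at hD
  exact ⟨D, hD.1, hD.2, hval.symm⟩

lemma nu_mono {A : Finset ℕ} {w w' : ℕ → ℕ} (h : ∀ n, w n ≤ w' n) :
    nu G A w ≤ nu G A w' := by
  apply Finset.sup_le
  intro D hD
  simp only [Finset.mem_filter, Finset.mem_powerset] at hD
  exact le_trans (Finset.sum_le_sum fun i _ => h i) (sum_le_nu hD.1 hD.2)

lemma nu_le {A : Finset ℕ} {w : ℕ → ℕ} {N : ℕ}
    (h : ∀ D : Finset ℕ, D ⊆ A → G.IsClique (D : Set ℕ) → ∑ i ∈ D, w i ≤ N) :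
    nu G A w ≤ N := by
  apply Finset.sup_le
  intro D hD
  simp only [Finset.mem_filter, Finset.mem_powerset] at hD
  exact h D hD.1 hD.2

lemma self_le_nu {A : Finset ℕ} {w : ℕ → ℕ} {v : ℕ} (hv : v ∈ A) : w v ≤ nu G A w := by
  have : ∑ i ∈ {v}, w i ≤ nu G A w :=
    sum_le_nu (Finset.singleton_subset_iff.2 hv) (by simp [SimpleGraph.isClique_singleton])
  simpa using this

lemma card_filter_map {α β : Type*} (f : α → β) (p : β → Prop) [DecidablePred p]
    (s : Multiset α) : ((s.map f).filter p).card = (s.filter (fun a => p (f a))).card := by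
  induction s using Multiset.induction_on with
  | empty => simp
  | cons a s ih =>
    simp only [Multiset.map_cons, Multiset.filter_cons, Multiset.card_add, ih]
    by_cases h : p (f a) <;> simp [h]

/-- clique sums vs cliques in induced subgraphs -/
lemma isNClique_iff_finset {W : Finset ℕ} {n : ℕ} :
    (∃ s : Finset ↥((W : Set ℕ)), (G.induce (W : Set ℕ)).IsNClique n s) ↔
      ∃ D : Finset ℕ, D ⊆ W ∧ G.IsClique (D : Set ℕ) ∧ D.card = n := by
  classical
  constructor
  · rintro ⟨s, hs⟩
    refine ⟨s.image Subtype.val, ?_, ?_, ?_⟩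
    · intro x hx
      simp only [Finset.mem_image] at hx
      obtain ⟨a, _, rfl⟩ := hx
      exact Finset.mem_coe.1 a.2
    · intro a ha b hb hab
      simp only [Finset.coe_image, Set.mem_image, Finset.mem_coe] at ha hb
      obtain ⟨a', ha', rfl⟩ := ha
      obtain ⟨b', hb', rfl⟩ := hb
      have hne : a' ≠ b' := fun h => hab (by rw [h])
      exact hs.1 ha' hb' hne
    · rw [Finset.card_image_of_injective _ Subtype.val_injective, hs.2]
  · rintro ⟨D, hDW, hcl, hcard⟩
    refine ⟨D.attach.map ⟨fun x => (⟨x.1, Finset.mem_coe.2 (hDW x.2)⟩ : ↥(W : Set ℕ)),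
      fun x y hxy => Subtype.ext (by simpa using congrArg Subtype.val hxy)⟩, ?_, ?_⟩
    · intro a ha b hb hab
      simp only [Finset.coe_map, Set.mem_image, Finset.mem_coe, Finset.mem_map,
        Function.Embedding.coeFn_mk, Finset.mem_attach, true_and] at ha hb
      obtain ⟨⟨a', ha'⟩, rfl⟩ := ha
      obtain ⟨⟨b', hb'⟩, rfl⟩ := hb
      have : a' ≠ b' := fun h => hab (by subst h; rfl)
      exact hcl ha' hb' this
    · simp [hcard]

/-- Base case: 0/1 weights. -/
lemma decomp01 (hG : IsPerfect G) (A : Finset ℕ) (w : ℕ → ℕ)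
    (h01 : ∀ n, w n ≤ 1) (hsupp : ∀ n ∉ A, w n = 0) :
    ∃ M : Multiset (Finset ℕ), M.card = nu G A w ∧
      (∀ S ∈ M, IsIndep G (S : Set ℕ)) ∧
      ∀ n, (M.filter (fun S => n ∈ S)).card = w n := by
  classical
  set W : Finset ℕ := A.filter (fun n => w n = 1) with hW
  have hwW : ∀ n, w n = if n ∈ W then 1 else 0 := by
    intro n
    by_cases hn : n ∈ W
    · rw [if_pos hn]
      exact (Finset.mem_filter.1 hn).2
    · rw [if_neg hn]
      by_cases hA : n ∈ A
      · rcases Nat.le_one_iff_eq_zero_or_eq_one.1 (h01 n) with h | h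
        · exact h
        · have hmem : n ∈ W := by
            rw [hW]
            exact Finset.mem_filter.2 ⟨hA, h⟩
          exact absurd hmem hn
      · exact hsupp n hA
  have hsum : ∀ D : Finset ℕ, ∑ i ∈ D, w i = (D.filter (fun n => n ∈ W)).card := by
    intro D
    rw [Finset.card_filter]
    exact Finset.sum_congr rfl fun i _ => hwW i
  rcases W.eq_empty_or_nonempty with hWe | hWne
  · have hw0 : ∀ n, w n = 0 := fun n => by rw [hwW n, hWe]; simp
    have hnu : nu G A w = 0 := by
      apply Nat.le_antisymm _ (Nat.zero_le _)
      apply Finset.sup_le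
      intro D _
      simp [hw0]
    exact ⟨0, by simp [hnu], by simp, fun n => by simp [hw0 n]⟩
  · set m : ℕ := cliqNum (G.induce (W : Set ℕ)) with hm
    have hcol : (G.induce (W : Set ℕ)).Colorable m := by
      have h1 : chromNum (G.induce (W : Set ℕ)) ∈ {n | (G.induce (W : Set ℕ)).Colorable n} := by
        apply Nat.sInf_mem
        exact ⟨_, SimpleGraph.colorable_of_fintype _⟩
      rw [hG W hWne] at h1
      exact h1
    have hWA : W ⊆ A := Finset.filter_subset _ _
    have hmnu : m = nu G A w := by
      apply le_antisymm
      · apply csSup_le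
        · exact ⟨0, ∅, by simp⟩
        · intro n hn
          obtain ⟨D, hDW, hcl, hcard⟩ := isNClique_iff_finset.1 hn
          have hDw : ∑ i ∈ D, w i = n := by
            rw [hsum, Finset.filter_true_of_mem (fun i hi => hDW hi), hcard]
          rw [← hDw]
          exact sum_le_nu (hDW.trans hWA) hcl
      · obtain ⟨D, hDA, hcl, hval⟩ := exists_eq_nu (G := G) A w
        set D' : Finset ℕ := D.filter (fun n => n ∈ W) with hD'
        have hD'W : D' ⊆ W := fun x hx => (Finset.mem_filter.1 hx).2
        have hcl' : G.IsClique (D' : Set ℕ) := by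
          apply hcl.subset
          intro x hx
          simp only [hD', Finset.coe_filter, Set.mem_setOf_eq, Finset.mem_coe] at hx ⊢
          exact hx.1
        have hcard' : D'.card = nu G A w := by
          rw [← hval, hsum]
        have hmem : nu G A w ∈ {n | ∃ s : Finset ↥((W : Set ℕ)),
            (G.induce (W : Set ℕ)).IsNClique n s} :=
          isNClique_iff_finset.2 ⟨D', hD'W, hcl', hcard'⟩
        apply le_csSup _ hmem
        refine ⟨Fintype.card ↥((W : Set ℕ)), ?_⟩
        rintro n ⟨s, hs⟩
        rw [← hs.2]
        exact Finset.card_le_univ s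
    -- build the color classes
    obtain ⟨c⟩ := hcol
    set Sj : Fin m → Finset ℕ :=
      fun j => ((Finset.univ : Finset ↥((W : Set ℕ))).filter (fun v => c v = j)).image
        Subtype.val with hSj
    have hSjW : ∀ j, Sj j ⊆ W := by
      intro j x hx
      simp only [hSj, Finset.mem_image, Finset.mem_filter] at hx
      obtain ⟨v, _, rfl⟩ := hx
      exact Finset.mem_coe.1 v.2
    have hmemSj : ∀ (n : ℕ) (hn : n ∈ W) (j : Fin m),
        n ∈ Sj j ↔ c ⟨n, Finset.mem_coe.2 hn⟩ = j := by
      intro n hn j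
      simp only [hSj, Finset.mem_image, Finset.mem_filter, Finset.mem_univ, true_and]
      constructor
      · rintro ⟨v, hv, rfl⟩
        have : v = ⟨↑v, Finset.mem_coe.2 hn⟩ := Subtype.ext rfl
        rwa [← this]
      · intro h
        exact ⟨⟨n, Finset.mem_coe.2 hn⟩, h, rfl⟩
    refine ⟨Multiset.map Sj (Finset.univ : Finset (Fin m)).val, ?_, ?_, ?_⟩
    · rw [Multiset.card_map, ← Finset.card_def, Finset.card_univ, Fintype.card_fin, hmnu]
    · intro S hS
      rw [Multiset.mem_map] at hS
      obtain ⟨j, _, rfl⟩ := hS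
      intro a ha b hb hab
      rw [Finset.mem_coe] at ha hb
      have haW := hSjW j ha
      have hbW := hSjW j hb
      have hca := (hmemSj a haW j).1 ha
      have hcb := (hmemSj b hbW j).1 hb
      have hne : (⟨a, Finset.mem_coe.2 haW⟩ : ↥((W : Set ℕ))) ≠ ⟨b, Finset.mem_coe.2 hbW⟩ := by
        intro h
        have hab' : a = b := congrArg Subtype.val h
        rw [hab'] at hab
        exact G.loopless.irrefl b hab
      have hadj : (G.induce (W : Set ℕ)).Adj ⟨a, Finset.mem_coe.2 haW⟩ ⟨b, Finset.mem_coe.2 hbW⟩ := by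
        simp only [SimpleGraph.comap_adj, Function.Embedding.coe_subtype]
        exact hab
      exact c.valid hadj (hca.trans hcb.symm)
    · intro n
      rw [card_filter_map]
      by_cases hn : n ∈ W
      · have hfe : (Finset.univ : Finset (Fin m)).filter (fun j => n ∈ Sj j) =
            {c ⟨n, Finset.mem_coe.2 hn⟩} := by
          apply Finset.ext
          intro j
          simp only [Finset.mem_filter, Finset.mem_univ, true_and, Finset.mem_singleton]
          rw [hmemSj n hn j]
          exact eq_comm
        rw [← Finset.filter_val]
        change (Finset.filter (fun j => n ∈ Sj j) Finset.univ).card = w n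
        rw [hfe, Finset.card_singleton, hwW n, if_pos hn]
      · have hfe : (Finset.univ : Finset (Fin m)).val.filter (fun j => n ∈ Sj j) = 0 := by
          rw [Multiset.filter_eq_nil]
          intro j _
          exact fun hmem => hn (hSjW j hmem)
        rw [hfe, hwW n, if_neg hn]
        rfl

lemma count_swap (M : Multiset (Finset ℕ)) (D : Finset ℕ) :
    (M.map (fun S => (D.filter (fun n => n ∈ S)).card)).sum =
      ∑ n ∈ D, (M.filter (fun S => n ∈ S)).card := by
  induction M using Multiset.induction_on with
  | empty => simp
  | cons S M ih =>
    simp only [Multiset.map_cons, Multiset.sum_cons, Multiset.filter_cons, Multiset.card_add, ih]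
    rw [Finset.sum_add_distrib, Finset.card_filter]
    congr 1
    apply Finset.sum_congr rfl
    intro n _
    by_cases h : n ∈ S <;> simp [h]

lemma filter_card_le_one {D S₁ : Finset ℕ} (hcl : G.IsClique (D : Set ℕ))
    (hind : IsIndep G (S₁ : Set ℕ)) : (D.filter (fun n => n ∈ S₁)).card ≤ 1 := by
  rw [Finset.card_le_one]
  intro a ha b hb
  simp only [Finset.mem_filter] at ha hb
  by_contra hne
  exact hind a ha.2 b hb.2 (hcl ha.1 hb.1 hne)

theorem decomp (hG : IsPerfect G) (A : Finset ℕ) :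
    ∀ N : ℕ, ∀ w : ℕ → ℕ, (∀ n ∉ A, w n = 0) → (∑ n ∈ A, w n ≤ N) →
    ∃ M : Multiset (Finset ℕ), M.card = nu G A w ∧
      (∀ S ∈ M, IsIndep G (S : Set ℕ)) ∧
      ∀ n, (M.filter (fun S => n ∈ S)).card = w n := by
  intro N
  induction N with
  | zero =>
    intro w hsupp hsum
    apply decomp01 hG A w _ hsupp
    intro n
    by_cases hn : n ∈ A
    · have h0 : ∑ n ∈ A, w n = 0 := Nat.le_zero.1 hsum
      have := (Finset.sum_eq_zero_iff).1 h0 n hn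
      omega
    · rw [hsupp n hn]
      omega
  | succ N ih =>
    intro w hsupp hsum
    by_cases hsmall : ∀ n, w n ≤ 1
    · exact decomp01 hG A w hsmall hsupp
    · push_neg at hsmall
      obtain ⟨v, hv⟩ := hsmall
      have hvA : v ∈ A := by
        by_contra h
        rw [hsupp v h] at hv
        omega
      set w' : ℕ → ℕ := Function.update w v (w v - 1) with hw'
      have hw'v : w' v = w v - 1 := by simp [hw']
      have hw'ne : ∀ n, n ≠ v → w' n = w n := fun n hn => Function.update_of_ne hn _ _
      have hw'le : ∀ n, w' n ≤ w n := by
        intro n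
        by_cases h : n = v
        · subst h; omega
        · rw [hw'ne n h]
      have hsupp' : ∀ n ∉ A, w' n = 0 := by
        intro n hn
        have h := hsupp n hn
        by_cases hnv : n = v
        · subst hnv; omega
        · rw [hw'ne n hnv]; exact h
      have hsum' : ∑ n ∈ A, w' n ≤ N := by
        have h1 : ∑ n ∈ A, w' n < ∑ n ∈ A, w n :=
          Finset.sum_lt_sum (fun i _ => hw'le i) ⟨v, hvA, by omega⟩
        omega
      obtain ⟨M', hc', hi', hn'⟩ := ih w' hsupp' hsum'
      have hnu_le : nu G A w' ≤ nu G A w := nu_mono hw'le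
      have hnu_ge : nu G A w ≤ nu G A w' + 1 := by
        apply Finset.sup_le
        intro D hD
        simp only [Finset.mem_filter, Finset.mem_powerset] at hD
        have hpt : ∑ i ∈ D, w i ≤ (∑ i ∈ D, w' i) + 1 := by
          have h1 : ∀ i ∈ D, w i ≤ w' i + (if i = v then 1 else 0) := by
            intro i _
            by_cases h : i = v
            · subst h; simp; omega
            · rw [hw'ne i h]; simp [h]
          calc ∑ i ∈ D, w i ≤ ∑ i ∈ D, (w' i + if i = v then 1 else 0) :=
                Finset.sum_le_sum h1
            _ = (∑ i ∈ D, w' i) + ∑ i ∈ D, (if i = v then 1 else 0) :=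
                Finset.sum_add_distrib
            _ ≤ (∑ i ∈ D, w' i) + 1 := by
                have : (∑ i ∈ D, (if i = v then 1 else 0)) = if v ∈ D then 1 else 0 :=
                  Finset.sum_ite_eq' D v (fun _ => 1)
                rw [this]
                split <;> omega
        have h2 := sum_le_nu (G := G) (w := w') hD.1 hD.2
        omega
      set q : ℕ := nu G A w with hq
      have hq2 : 2 ≤ q := le_trans (by omega) (self_le_nu (w := w) hvA)
      rcases (by omega : nu G A w' + 1 = q ∨ nu G A w' = q) with hcase | hcase
      · -- new color just for v
        refine ⟨{v} ::ₘ M', ?_, ?_, ?_⟩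
        · rw [Multiset.card_cons, hc', hcase]
        · intro S hS
          rcases Multiset.mem_cons.1 hS with h | h
          · subst h
            intro a ha b hb
            simp only [Finset.coe_singleton, Set.mem_singleton_iff] at ha hb
            rw [ha, hb]
            exact G.loopless.irrefl v
          · exact hi' S h
        · intro n
          rw [Multiset.filter_cons]
          by_cases h : n ∈ ({v} : Finset ℕ)
          · rw [if_pos h, Multiset.card_add, hn' n]
            simp only [Finset.mem_singleton] at h
            subst h
            simp [hw'v]
            omega
          · rw [if_neg h, Multiset.card_add, hn' n]
            simp only [Finset.mem_singleton] at h
            rw [hw'ne n h]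
            simp
      · -- reuse a class containing v
        have hM'v : 0 < (M'.filter (fun S => v ∈ S)).card := by
          rw [hn' v, hw'v]; omega
        obtain ⟨S₁, hS₁f⟩ := Multiset.card_pos_iff_exists_mem.1 hM'v
        have hS₁M : S₁ ∈ M' := Multiset.mem_of_mem_filter hS₁f
        have hvS₁ : v ∈ S₁ := (Multiset.mem_filter.1 hS₁f).2
        have hwS : ∀ n ∈ S₁, 1 ≤ w n := by
          intro n hn
          have h1 : S₁ ∈ M'.filter (fun S => n ∈ S) := Multiset.mem_filter.2 ⟨hS₁M, hn⟩
          have h2 : 0 < (M'.filter (fun S => n ∈ S)).card :=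
            Multiset.card_pos_iff_exists_mem.2 ⟨S₁, h1⟩
          rw [hn' n] at h2
          have := hw'le n
          omega
        set u : ℕ → ℕ := fun n => w n - (if n ∈ S₁ then 1 else 0) with hu
        have hu_add : ∀ n, u n + (if n ∈ S₁ then 1 else 0) = w n := by
          intro n
          by_cases h : n ∈ S₁
          · have := hwS n h
            simp [hu, h]
            omega
          · simp [hu, h]
        have hsuppu : ∀ n ∉ A, u n = 0 := by
          intro n hn
          have := hsupp n hn
          have := hu_add n
          omega
        have hule : ∀ n, u n ≤ w n := fun n => by have := hu_add n; omega
        have hsumu : ∑ n ∈ A, u n ≤ N := by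
          have h1 : ∑ n ∈ A, u n < ∑ n ∈ A, w n := by
            apply Finset.sum_lt_sum (fun i _ => hule i)
            refine ⟨v, hvA, ?_⟩
            have := hu_add v
            rw [if_pos hvS₁] at this
            omega
          omega
        have hS₁indep : IsIndep G (S₁ : Set ℕ) := hi' S₁ hS₁M
        -- the key bound
        have hnuu : nu G A u ≤ q - 1 := by
          apply Finset.sup_le
          intro D hD
          simp only [Finset.mem_filter, Finset.mem_powerset] at hD
          have hsplit : (∑ i ∈ D, u i) + (D.filter (fun n => n ∈ S₁)).card = ∑ i ∈ D, w i := by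
            rw [Finset.card_filter, ← Finset.sum_add_distrib]
            apply Finset.sum_congr rfl
            intro n _
            exact hu_add n
          have hc1 : (D.filter (fun n => n ∈ S₁)).card ≤ 1 := filter_card_le_one hD.2 hS₁indep
          have hDle : ∑ i ∈ D, w i ≤ q := sum_le_nu hD.1 hD.2
          by_cases hvD : v ∈ D
          · have h1 : 0 < (D.filter (fun n => n ∈ S₁)).card :=
              Finset.card_pos.2 ⟨v, Finset.mem_filter.2 ⟨hvD, hvS₁⟩⟩
            omega
          · have hDw' : ∑ i ∈ D, w i = ∑ i ∈ D, w' i := by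
              apply Finset.sum_congr rfl
              intro i hi
              have : i ≠ v := fun h => hvD (h ▸ hi)
              exact (hw'ne i this).symm
            by_cases hmax : ∑ i ∈ D, w' i = q
            · -- D is a maximum-weight clique for w'; it meets S₁
              have hrhs : ∑ n ∈ D, (M'.filter (fun S => n ∈ S)).card = q := by
                rw [Finset.sum_congr rfl (fun n _ => hn' n), ← hmax]
              have hsum_all :
                  (M'.map (fun S => (D.filter (fun n => n ∈ S)).card)).sum = q := by
                rw [count_swap M' D, hrhs]
              have hterm : ∀ S ∈ M', (D.filter (fun n => n ∈ S)).card ≤ 1 :=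
                fun S hS => filter_card_le_one hD.2 (hi' S hS)
              have hce : M' = S₁ ::ₘ M'.erase S₁ := (Multiset.cons_erase hS₁M).symm
              have hsum_erase :
                  ((M'.erase S₁).map (fun S => (D.filter (fun n => n ∈ S)).card)).sum ≤
                    (M'.erase S₁).card := by
                have := Multiset.sum_le_card_nsmul
                  ((M'.erase S₁).map (fun S => (D.filter (fun n => n ∈ S)).card)) 1 ?_
                · simpa using this
                · intro x hx
                  rw [Multiset.mem_map] at hx
                  obtain ⟨S, hS, rfl⟩ := hx
                  exact hterm S (Multiset.mem_of_mem_erase hS)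
              have hcards : (M'.erase S₁).card = q - 1 := by
                rw [Multiset.card_erase_of_mem hS₁M, hc', hcase]
                rfl
              have hS₁card : 1 ≤ (D.filter (fun n => n ∈ S₁)).card := by
                by_contra hcon
                push_neg at hcon
                have h0 : (D.filter (fun n => n ∈ S₁)).card = 0 := by omega
                rw [hce, Multiset.map_cons, Multiset.sum_cons, h0, zero_add] at hsum_all
                rw [hcards] at hsum_erase
                omega
              omega
            · have h2 := sum_le_nu (G := G) (w := w') hD.1 hD.2
              rw [hcase] at h2
              have h3 : ∑ i ∈ D, w' i ≤ q - 1 := by omega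
              have h4 : ∑ i ∈ D, u i ≤ ∑ i ∈ D, w i := by omega
              omega
        obtain ⟨M'', hc'', hi'', hn''⟩ := ih u hsuppu hsumu
        refine ⟨S₁ ::ₘ (M'' + Multiset.replicate (q - 1 - nu G A u) ∅), ?_, ?_, ?_⟩
        · rw [Multiset.card_cons, Multiset.card_add, hc'', Multiset.card_replicate]
          omega
        · intro S hS
          rcases Multiset.mem_cons.1 hS with h | h
          · subst h; exact hS₁indep
          · rcases Multiset.mem_add.1 h with h | h
            · exact hi'' S h
            · have := Multiset.eq_of_mem_replicate h
              subst this
              intro a ha b hb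
              simp at ha
        · intro n
          rw [Multiset.filter_cons, Multiset.card_add, Multiset.filter_add, Multiset.card_add,
            hn'' n]
          have hrep : ((Multiset.replicate (q - 1 - nu G A u) ∅).filter
              (fun S : Finset ℕ => n ∈ S)).card = 0 := by
            rw [Multiset.filter_eq_nil.2]
            · rfl
            · intro S hS
              rw [Multiset.eq_of_mem_replicate hS]
              simp
          rw [hrep]
          have := hu_add n
          by_cases h : n ∈ S₁
          · rw [if_pos h] at this ⊢
            simp only [Multiset.card_singleton]
            omega
          · rw [if_neg h] at this ⊢
            simp only [Multiset.card_zero]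
            omega

end Comb

section Hull
set_option linter.unusedSectionVars false
variable {P : Set (ℕ → ℝ)}

lemma inv_length_smul_sum_mem_hull :
    ∀ L : List (ℕ → ℝ), L ≠ [] → (∀ z ∈ L, z ∈ P) →
      ((L.length : ℝ))⁻¹ • L.sum ∈ convexHull ℝ P := by
  intro L
  induction L with
  | nil => intro h; exact absurd rfl h
  | cons z L ih =>
    intro _ hmem
    have hz : z ∈ convexHull ℝ P := subset_convexHull ℝ P (hmem z (by simp))
    rcases L.eq_nil_or_concat with hL | hLne
    · subst hL
      simp only [List.sum_cons, List.sum_nil, add_zero, List.length_cons, List.length_nil]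
      norm_num
      exact hz
    · have hLne' : L ≠ [] := by rintro rfl; obtain ⟨_, _, h⟩ := hLne; simp at h
      have hIH := ih hLne' (fun w hw => hmem w (List.mem_cons_of_mem _ hw))
      set n : ℕ := L.length with hn
      have hn1 : 1 ≤ n := by
        rcases L with _ | _
        · exact absurd rfl hLne'
        · simp [hn]
      have hnR : (1:ℝ) ≤ (n:ℝ) := by exact_mod_cast hn1
      have hnpos : (0:ℝ) < n := by linarith
      have hcomb := (convex_convexHull ℝ P) hz hIH
        (a := 1/((n:ℝ)+1)) (b := (n:ℝ)/((n:ℝ)+1)) (by positivity) (by positivity)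
        (by field_simp; ring)
      have heq : (1/((n:ℝ)+1)) • z + ((n:ℝ)/((n:ℝ)+1)) • ((n:ℝ)⁻¹ • L.sum) =
          (((z :: L).length : ℝ))⁻¹ • (z :: L).sum := by
        rw [smul_smul, List.sum_cons, List.length_cons, smul_add]
        have h1 : (n:ℝ)/((n:ℝ)+1) * ((n:ℝ))⁻¹ = 1/((n:ℝ)+1) := by field_simp
        have h2 : ((n + 1 : ℕ) : ℝ)⁻¹ = 1/((n:ℝ)+1) := by push_cast; field_simp
        rw [h1, h2, hn]
      rw [heq] at hcomb
      exact hcomb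

lemma map_sigma_sum_apply (sg : ℕ → ℝ) :
    ∀ (L : List (Finset ℕ)) (n : ℕ),
      (L.map (fun S m => if m ∈ S then sg m else 0)).sum n =
        sg n * (((↑L : Multiset (Finset ℕ)).filter (fun S => n ∈ S)).card : ℝ) := by
  intro L
  induction L with
  | nil => intro n; simp
  | cons S L ih =>
    intro n
    rw [List.map_cons, List.sum_cons, Pi.add_apply, ih n]
    have hcons : (↑(S :: L) : Multiset (Finset ℕ)) = S ::ₘ (↑L : Multiset (Finset ℕ)) := rfl
    rw [hcons, Multiset.filter_cons, Multiset.card_add]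
    by_cases h : n ∈ S <;> simp only [h, if_true, if_false, Multiset.card_singleton,
      Multiset.card_zero] <;> push_cast <;> ring
end Hull

section Glue

variable {G : SimpleGraph ℕ}

lemma approx (hG : IsPerfect G) {x : ℕ → ℝ} (hx : x ∈ K G) (H : Finset ℕ) {ε : ℝ}
    (hε : 0 < ε) : ∃ y ∈ convexHull ℝ (Sgn G), ∀ n ∈ H, |y n - x n| ≤ ε := by
  classical
  obtain ⟨N, hN1, hNe⟩ : ∃ N : ℕ, 1 ≤ N ∧ 1/(N:ℝ) ≤ ε := by
    obtain ⟨N₀, hN₀⟩ := exists_nat_one_div_lt hε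
    refine ⟨N₀+1, by omega, ?_⟩
    push_cast
    linarith
  have hNpos : (0:ℝ) < N := by
    have : (0:ℕ) < N := hN1
    exact_mod_cast this
  set w : ℕ → ℕ := fun n => if n ∈ H then ⌊(N:ℝ) * |x n|⌋₊ else 0 with hw
  have hsupp : ∀ n ∉ H, w n = 0 := fun n hn => by simp [hw, hn]
  have hnuN : nu G H w ≤ N := by
    apply nu_le
    intro D hD hcl
    have hsum : ((∑ i ∈ D, w i : ℕ) : ℝ) ≤ (N:ℝ) * ∑ i ∈ D, |x i| := by
      push_cast
      calc ∑ i ∈ D, (w i:ℝ) ≤ ∑ i ∈ D, (N:ℝ) * |x i| := by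
            apply Finset.sum_le_sum
            intro i hi
            have : w i = ⌊(N:ℝ) * |x i|⌋₊ := by rw [hw]; simp [hD hi]
            rw [this]
            exact Nat.floor_le (by positivity)
        _ = (N:ℝ) * ∑ i ∈ D, |x i| := by rw [Finset.mul_sum]
    have hK1 : ∑ i ∈ D, |x i| ≤ 1 := mem_K_iff.1 hx D hcl
    have h2 : ((∑ i ∈ D, w i : ℕ) : ℝ) ≤ (N:ℝ) := by nlinarith
    exact_mod_cast h2
  obtain ⟨M, hMc, hMi, hMn⟩ := decomp hG H (∑ n ∈ H, w n) w hsupp (le_refl _)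
  set M' : Multiset (Finset ℕ) := M + Multiset.replicate (N - nu G H w) ∅ with hM'
  have hM'c : M'.card = N := by
    rw [hM', Multiset.card_add, hMc, Multiset.card_replicate]
    omega
  have hM'i : ∀ S ∈ M', IsIndep G (S : Set ℕ) := by
    intro S hS
    rcases Multiset.mem_add.1 hS with h | h
    · exact hMi S h
    · rw [Multiset.eq_of_mem_replicate h]
      intro a ha b hb
      simp at ha
  have hM'n : ∀ n, (M'.filter (fun S => n ∈ S)).card = w n := by
    intro n
    rw [hM', Multiset.filter_add, Multiset.card_add, hMn]
    have h0 : ((Multiset.replicate (N - nu G H w) ∅).filter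
        (fun S : Finset ℕ => n ∈ S)).card = 0 := by
      rw [Multiset.filter_eq_nil.2]
      · rfl
      · intro S hS
        rw [Multiset.eq_of_mem_replicate hS]
        simp
    rw [h0]
    omega
  have hM'cpos : 0 < N := hN1
  set sg : ℕ → ℝ := fun n => if x n < 0 then -1 else if 0 < x n then 1 else 0 with hsg
  set σf : Finset ℕ → (ℕ → ℝ) := fun S m => if m ∈ S then sg m else 0 with hσf
  set L : List (Finset ℕ) := M'.toList with hLdef
  have hLM : (↑L : Multiset (Finset ℕ)) = M' := Multiset.coe_toList M'
  have hLlen : L.length = N := by rw [hLdef, Multiset.length_toList, hM'c]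
  refine ⟨((L.map σf).length : ℝ)⁻¹ • (L.map σf).sum, ?_, ?_⟩
  · apply inv_length_smul_sum_mem_hull
    · intro h
      rw [List.map_eq_nil_iff] at h
      rw [h] at hLlen
      simp at hLlen
      omega
    · intro z hz
      rw [List.mem_map] at hz
      obtain ⟨S, hS, rfl⟩ := hz
      have hSM : S ∈ M' := by
        rw [← hLM]
        exact Multiset.mem_coe.2 hS
      constructor
      · intro m
        rw [hσf]
        by_cases h : m ∈ S
        · simp only [if_pos h, hsg]
          rcases lt_trichotomy (x m) 0 with h1 | h1 | h1
          · left; simp [h1]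
          · right; left; simp [h1]
          · right; right; simp [h1, not_lt.2 (le_of_lt h1), asymm h1]
        · right; left; simp [h]
      · have hsub : Function.support (σf S) ⊆ (S : Set ℕ) := by
          intro m hm
          by_contra h
          apply hm
          have h' : m ∉ S := fun hh => h (Finset.mem_coe.2 hh)
          simp [hσf, h']
        intro a ha b hb
        exact hM'i S hSM a (hsub ha) b (hsub hb)
  · intro n hn
    have hyn : (((L.map σf).length : ℝ)⁻¹ • (L.map σf).sum) n = sg n * ((w n : ℝ) / N) := by
      rw [Pi.smul_apply, map_sigma_sum_apply sg L n, hLM, hM'n n, List.length_map, hLlen]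
      rw [smul_eq_mul]
      ring
    rw [hyn]
    have hwn : w n = ⌊(N:ℝ) * |x n|⌋₊ := by rw [hw]; simp [hn]
    have hflo : ((w n : ℝ)) ≤ (N:ℝ) * |x n| := by
      rw [hwn]
      exact Nat.floor_le (by positivity)
    have hfhi : (N:ℝ) * |x n| < (w n : ℝ) + 1 := by
      rw [hwn]
      exact Nat.lt_floor_add_one _
    have hmain : |(w n:ℝ)/(N:ℝ) - (|x n|)| ≤ 1/(N:ℝ) := by
      have hup : ((w n:ℝ))/(N:ℝ) ≤ |x n| := by
        rw [div_le_iff₀ hNpos]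
        nlinarith
      have hlo : |x n| ≤ ((w n:ℝ))/(N:ℝ) + 1/(N:ℝ) := by
        rw [← add_div, le_div_iff₀ hNpos]
        nlinarith
      have hpos : (0:ℝ) < 1/(N:ℝ) := by positivity
      rw [abs_le]
      constructor <;> linarith
    by_cases h0 : x n = 0
    · have hsg0 : sg n = 0 := by simp [hsg, h0]
      rw [hsg0, h0]
      simp only [zero_mul, sub_zero, abs_zero]
      linarith
    · rcases lt_or_gt_of_ne h0 with hlt | hgt
      · have hsgn : sg n = -1 := by simp [hsg, hlt]
        have habs : |x n| = -x n := abs_of_neg hlt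
        rw [hsgn]
        have heq : (-1:ℝ) * ((w n:ℝ)/N) - x n = -(((w n:ℝ))/(N:ℝ) - |x n|) := by
          rw [habs]; ring
        rw [heq, abs_neg]
        linarith
      · have hsgn : sg n = 1 := by
          simp only [hsg]
          rw [if_neg (by linarith), if_pos hgt]
        have habs : |x n| = x n := abs_of_pos hgt
        rw [hsgn]
        have heq : (1:ℝ) * ((w n:ℝ)/N) - x n = ((w n:ℝ))/(N:ℝ) - |x n| := by
          rw [habs]; ring
        rw [heq]
        linarith

lemma K_closed : IsClosed (K G) := by
  have h : K G = ⋂ C ∈ cliques G, {y : ℕ → ℝ | ∑ i ∈ C, |y i| ≤ 1} := by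
    ext y
    simp only [Set.mem_iInter]
    exact mem_K_iff
  rw [h]
  refine isClosed_biInter fun C hC => isClosed_le ?_ continuous_const
  exact continuous_finset_sum _ (fun i _ => (continuous_apply i).abs)

lemma K_convex : Convex ℝ (K G) := by
  intro p hp q hq a b ha hb hab
  rw [mem_K_iff] at *
  intro C hC
  calc ∑ i ∈ C, |(a • p + b • q) i| ≤ ∑ i ∈ C, (a * |p i| + b * |q i|) := by
        apply Finset.sum_le_sum
        intro i _
        simp only [Pi.add_apply, Pi.smul_apply, smul_eq_mul]
        calc |a * p i + b * q i| ≤ |a * p i| + |b * q i| := abs_add_le _ _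
          _ = a * |p i| + b * |q i| := by
              rw [abs_mul, abs_mul, abs_of_nonneg ha, abs_of_nonneg hb]
    _ = a * (∑ i ∈ C, |p i|) + b * (∑ i ∈ C, |q i|) := by
        rw [Finset.sum_add_distrib, Finset.mul_sum, Finset.mul_sum]
    _ ≤ a * 1 + b * 1 :=
        add_le_add (mul_le_mul_of_nonneg_left (hp C hC) ha)
          (mul_le_mul_of_nonneg_left (hq C hC) hb)
    _ = 1 := by rw [mul_one, mul_one, hab]

lemma K_compact : IsCompact (K G) := by
  apply IsCompact.of_isClosed_subset
    (isCompact_univ_pi (fun n : ℕ => isCompact_Icc (a := (-1:ℝ)) (b := 1))) K_closed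
  intro y hy
  rw [Set.mem_univ_pi]
  intro n
  exact abs_le.1 (abs_le_one_of_mem_K hy n)

lemma Sgn_closed : IsClosed (Sgn G) := by
  have h : Sgn G = (⋂ n, {σ : ℕ → ℝ | σ n = -1 ∨ σ n = 0 ∨ σ n = 1}) ∩
      (⋂ (a : ℕ) (b : ℕ) (_ : G.Adj a b), {σ : ℕ → ℝ | σ a = 0 ∨ σ b = 0}) := by
    ext σ
    simp only [Sgn, Set.mem_setOf_eq, Set.mem_inter_iff, Set.mem_iInter]
    constructor
    · rintro ⟨hval, hind⟩
      refine ⟨hval, fun a b hadj => ?_⟩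
      by_contra hcon
      push_neg at hcon
      exact hind a hcon.1 b hcon.2 hadj
    · rintro ⟨hval, hind⟩
      refine ⟨hval, fun a ha b hb hadj => ?_⟩
      rcases hind a b hadj with hc | hc
      · exact ha hc
      · exact hb hc
  rw [h]
  apply IsClosed.inter
  · refine isClosed_iInter fun n => ?_
    have h1 : {σ : ℕ → ℝ | σ n = -1 ∨ σ n = 0 ∨ σ n = 1} =
        (fun σ : ℕ → ℝ => σ n) ⁻¹' {-1, 0, 1} := by
      ext z
      simp [Set.mem_insert_iff]
    rw [h1]
    apply IsClosed.preimage (continuous_apply n)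
    exact (((Set.finite_singleton (1:ℝ)).insert 0).insert (-1)).isClosed
  · refine isClosed_iInter fun a => isClosed_iInter fun b => isClosed_iInter fun _ => ?_
    exact (isClosed_eq (continuous_apply a) continuous_const).union
      (isClosed_eq (continuous_apply b) continuous_const)

lemma hull_dense (hG : IsPerfect G) : K G ⊆ closure (convexHull ℝ (Sgn G)) := by
  intro x hx
  rw [mem_closure_iff]
  intro U hUopen hxU
  obtain ⟨I, u, hu, hpi⟩ := isOpen_pi_iff.1 hUopen x hxU
  have hδ : ∃ δ : ℝ, 0 < δ ∧ ∀ i ∈ I, ∀ r : ℝ, |r - x i| ≤ δ → r ∈ u i := by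
    have h1 : ∀ i ∈ I, ∃ ε : ℝ, 0 < ε ∧ ∀ r : ℝ, |r - x i| ≤ ε → r ∈ u i := by
      intro i hi
      obtain ⟨ε, hε, hball⟩ := Metric.isOpen_iff.1 (hu i hi).1 (x i) (hu i hi).2
      exact ⟨ε/2, half_pos hε, fun r hr =>
        hball (by rw [Metric.mem_ball, Real.dist_eq]; linarith)⟩
    choose! εf hεf using h1
    rcases I.eq_empty_or_nonempty with h | h
    · exact ⟨1, one_pos, by simp [h]⟩
    · refine ⟨I.inf' h εf, (Finset.lt_inf'_iff h).2 fun i hi => (hεf i hi).1, ?_⟩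
      intro i hi r hr
      exact (hεf i hi).2 r (le_trans hr (Finset.inf'_le _ hi))
  obtain ⟨δ, hδpos, hδball⟩ := hδ
  obtain ⟨y, hyhull, hyclose⟩ := approx hG hx I hδpos
  refine ⟨y, ?_, hyhull⟩
  apply hpi
  intro i hi
  exact hδball i hi (y i) (hyclose i hi)

lemma extreme_subset_rhs (hG : IsPerfect G) {σ : ℕ → ℝ}
    (hσ : σ ∈ Set.extremePoints ℝ (K G)) : σ ∈ RHS G := by
  have hmem : σ ∈ Sgn G :=
    milman_pi K_compact K_convex Sgn_closed Sgn_subset_K (hull_dense hG) hσ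
  refine ⟨hmem.1, hmem.2, ?_⟩
  intro t ht hsub
  apply Set.Subset.antisymm _ hsub
  intro n hnt
  by_contra hns
  have hx0 : σ n = 0 := Function.notMem_support.1 hns
  set y₁ : ℕ → ℝ := Function.update σ n 1 with hy₁
  set y₂ : ℕ → ℝ := Function.update σ n (-1) with hy₂
  have hsub1 : Function.support y₁ ⊆ t := by
    intro m hm
    by_cases h : m = n
    · rw [h]; exact hnt
    · apply hsub
      have : y₁ m = σ m := Function.update_of_ne h _ _
      rw [Function.mem_support, this] at hm
      exact hm
  have hsub2 : Function.support y₂ ⊆ t := by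
    intro m hm
    by_cases h : m = n
    · rw [h]; exact hnt
    · apply hsub
      have : y₂ m = σ m := Function.update_of_ne h _ _
      rw [Function.mem_support, this] at hm
      exact hm
  have hval : ∀ m, σ m = -1 ∨ σ m = 0 ∨ σ m = 1 := hmem.1
  have hindsub : ∀ s : Set ℕ, s ⊆ t → IsIndep G s := by
    intro s hs a ha b hb
    exact ht a (hs ha) b (hs hb)
  have hy₁S : y₁ ∈ Sgn G := by
    constructor
    · intro m
      by_cases h : m = n
      · subst h; right; right; simp [hy₁]
      · rw [hy₁, Function.update_of_ne h]
        exact hval m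
    · exact hindsub _ hsub1
  have hy₂S : y₂ ∈ Sgn G := by
    constructor
    · intro m
      by_cases h : m = n
      · subst h; left; simp [hy₂]
      · rw [hy₂, Function.update_of_ne h]
        exact hval m
    · exact hindsub _ hsub2
  have hseg : σ ∈ openSegment ℝ y₁ y₂ := by
    refine ⟨1/2, 1/2, by norm_num, by norm_num, by norm_num, ?_⟩
    funext m
    by_cases h : m = n
    · subst h
      simp [hy₁, hy₂, hx0]
    · simp only [Pi.add_apply, Pi.smul_apply, smul_eq_mul, hy₁, hy₂,
        Function.update_of_ne h]
      ring
  have := hσ.2 (Sgn_subset_K hy₁S) (Sgn_subset_K hy₂S) hseg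
  have h1 : y₁ n = σ n := by rw [this]
  rw [hx0, hy₁] at h1
  simp at h1

end Glue

end Stmt7

theorem stmt_7 (G : SimpleGraph ℕ) (hG : IsPerfect G) :
    Set.extremePoints ℝ {y : ℕ → ℝ | combNorm (cliques G) y ≤ 1} =
    {σ : ℕ → ℝ | (∀ n, σ n = -1 ∨ σ n = 0 ∨ σ n = 1) ∧
      IsIndep G (Function.support σ) ∧
      ∀ t : Set ℕ, IsIndep G t → Function.support σ ⊆ t → t = Function.support σ} := by
  ext σ
  constructor
  · intro hσ
    exact Stmt7.extreme_subset_rhs hG hσ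
  · intro hσ
    exact Stmt7.rhs_subset_extreme hσ
end
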